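/- arXiv:1009.5692 — 7 statements merged into one kernel-verified Lean document; each statement's English description precedes it below -/
import Mathlib

section
/- Let u : Ω → ℝ be a convex function on an open set Ω ⊆ ℝⁿ. Then ∂u(x) equals the closed convex hull of the reachable gradient ∇*u(x) = {p : ∃ xₖ → x with u differentiable at each xₖ and ∇u(xₖ) → p}. -/
open RealInnerProductSpace Filter Metric MeasureTheory Topology

/-- The subdifferential of `u` at `x` relative to `Ω`: all `p` such that
`u (x+h) ≥ u x + ⟪p, h⟫` whenever the segment `[x, x+h]` lies in `Ω`. -/
def subdiff {n : ℕ} (Ω : Set (EuclideanSpace ℝ (Fin n))) (u : EuclideanSpace ℝ (Fin n) → ℝ)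
    (x : EuclideanSpace ℝ (Fin n)) : Set (EuclideanSpace ℝ (Fin n)) :=
  {p | ∀ h : EuclideanSpace ℝ (Fin n), segment ℝ x (x + h) ⊆ Ω → u x + ⟪p, h⟫ ≤ u (x + h)}

/-- The reachable gradient of `u` at `x`: limits of gradients of `u` along sequences of
differentiability points converging to `x`. -/
def reachGrad {n : ℕ} (Ω : Set (EuclideanSpace ℝ (Fin n))) (u : EuclideanSpace ℝ (Fin n) → ℝ)
    (x : EuclideanSpace ℝ (Fin n)) : Set (EuclideanSpace ℝ (Fin n)) :=
  {p | ∃ xk : ℕ → EuclideanSpace ℝ (Fin n), ∃ g : ℕ → EuclideanSpace ℝ (Fin n),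
    (∀ k, xk k ∈ Ω) ∧ Tendsto xk atTop (𝓝 x) ∧
    (∀ k, HasGradientAt u (g k) (xk k)) ∧ Tendsto g atTop (𝓝 p)}


set_option maxHeartbeats 1000000

open Set

section Aux

variable {n : ℕ}
local notation "E" => EuclideanSpace ℝ (Fin n)

/-- gradient inequality for convex functions along a segment -/
lemma grad_subgrad {Ω : Set E} {u : E → ℝ} (hu : ConvexOn ℝ Ω u)
    {y g h : E} (hg : HasGradientAt u g y) (hseg : segment ℝ y (y + h) ⊆ Ω) :
    u y + ⟪g, h⟫ ≤ u (y + h) := by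
  have hmem : ∀ t : ℝ, t ∈ Icc (0:ℝ) 1 → y + t • h ∈ Ω := by
    intro t ht
    apply hseg
    rw [segment_eq_image']
    exact ⟨t, ht, by simp⟩
  set φ : ℝ → ℝ := fun t => u (y + t • h) with hφ
  -- φ is convex on Icc 0 1
  have hA : ConvexOn ℝ (Icc (0:ℝ) 1) φ := by
    have := hu.comp_affineMap (AffineMap.lineMap y (y + h) : ℝ →ᵃ[ℝ] E)
    have heq : ∀ t : ℝ, (AffineMap.lineMap y (y + h) : ℝ →ᵃ[ℝ] E) t = y + t • h := by
      intro t; simp [AffineMap.lineMap_apply]; abel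
    refine ((this.subset ?_ (convex_Icc 0 1)).congr ?_ : ConvexOn ℝ (Icc (0:ℝ) 1) φ)
    · intro t ht
      simp only [Set.mem_preimage, heq]
      exact hmem t ht
    · intro t _ ; simp [Function.comp, heq, hφ]
  -- derivative of φ at 0 is ⟪g, h⟫
  have hder : HasDerivAt φ ⟪g, h⟫ 0 := by
    have h1 : HasFDerivAt u (InnerProductSpace.toDual ℝ E g) y :=
      (hasGradientAt_iff_hasFDerivAt.1 hg)
    have h2 : HasDerivAt (fun t : ℝ => y + t • h) h 0 := by
      have : HasDerivAt (fun t : ℝ => t • h) ((1:ℝ) • h) 0 := (hasDerivAt_id 0).smul_const h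
      simpa using this.const_add y
    have h1' : HasFDerivAt u (InnerProductSpace.toDual ℝ E g) (y + (0:ℝ) • h) := by
      simpa using h1
    have h3 := h1'.comp_hasDerivAt (x := (0:ℝ)) h2
    simp [InnerProductSpace.toDual_apply_apply] at h3; exact h3
  -- slopes
  have hslope : ∀ᶠ t in 𝓝[>] (0:ℝ), slope φ 0 t ≤ φ 1 - φ 0 := by
    filter_upwards [Ioo_mem_nhdsGT_of_mem (Set.left_mem_Ico.2 one_pos)] with t ht
    have := hA.secant_mono (a := 0) (x := t) (y := 1)
      (Set.left_mem_Icc.2 zero_le_one) ⟨ht.1.le, ht.2.le⟩ (Set.right_mem_Icc.2 zero_le_one)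
      (ne_of_gt ht.1) one_ne_zero ht.2.le
    simpa [slope_def_field, div_one] using this
  have htend : Tendsto (slope φ 0) (𝓝[>] (0:ℝ)) (𝓝 ⟪g, h⟫) := by
    have := (hasDerivAt_iff_tendsto_slope.1 hder)
    exact this.mono_left (nhdsWithin_mono 0 (fun t ht => ne_of_gt ht))
  have := le_of_tendsto htend hslope
  have h0 : φ 0 = u y := by simp [hφ]
  have h1' : φ 1 = u (y + h) := by simp [hφ]
  rw [h0, h1'] at this
  linarith

lemma subdiff_closed (Ω : Set E) (u : E → ℝ) (x : E) : IsClosed (subdiff Ω u x) := by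
  have : subdiff Ω u x = ⋂ (h : E) (_ : segment ℝ x (x + h) ⊆ Ω),
      {p : E | u x + ⟪p, h⟫ ≤ u (x + h)} := by
    ext p; simp [subdiff, Set.mem_iInter]
  rw [this]
  refine isClosed_iInter fun h => isClosed_iInter fun _ => ?_
  exact isClosed_le (continuous_const.add (continuous_id.inner continuous_const)) continuous_const

lemma subdiff_convex (Ω : Set E) (u : E → ℝ) (x : E) : Convex ℝ (subdiff Ω u x) := by
  intro p hp q hq a b ha hb hab
  intro h hseg
  have h1 := hp h hseg
  have h2 := hq h hseg
  have : ⟪a • p + b • q, h⟫ = a * ⟪p, h⟫ + b * ⟪q, h⟫ := by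
    simp [inner_add_left, inner_smul_left]
  rw [this]
  have e1 := mul_le_mul_of_nonneg_left h1 ha
  have e2 := mul_le_mul_of_nonneg_left h2 hb
  have e3 : a * u x + b * u x = u x := by
    have : a * u x + b * u x = (a + b) * u x := by ring
    rw [this, hab, one_mul]
  have e4 : a * u (x + h) + b * u (x + h) = u (x + h) := by
    have : a * u (x + h) + b * u (x + h) = (a + b) * u (x + h) := by ring
    rw [this, hab, one_mul]
  linarith

lemma grad_bound {u : E → ℝ} {L : NNReal} {x : E} {r : ℝ}
    (hL : LipschitzOnWith L u (ball x r)) {y g : E} (hy : y ∈ ball x r)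
    (hg : HasGradientAt u g y) : ‖g‖ ≤ L := by
  have h1 := (hasGradientAt_iff_hasFDerivAt.1 hg).le_of_lipschitzOn
    (isOpen_ball.mem_nhds hy) hL
  calc ‖g‖ = ‖InnerProductSpace.toDual ℝ (EuclideanSpace ℝ (Fin n)) g‖ :=
        ((InnerProductSpace.toDual ℝ (EuclideanSpace ℝ (Fin n))).norm_map g).symm
    _ ≤ L := h1

-- Lipschitz ball around x
lemma exists_lip {Ω : Set E} (hΩ : IsOpen Ω) {u : E → ℝ} (hu : ConvexOn ℝ Ω u)
    {x : E} (hx : x ∈ Ω) :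
    ∃ r : ℝ, ∃ L : NNReal, 0 < r ∧ ball x r ⊆ Ω ∧ LipschitzOnWith L u (ball x r) := by
  obtain ⟨L, t, ht, hL⟩ := hu.locallyLipschitzOn hΩ hx
  rw [nhdsWithin_eq_nhds.2 (hΩ.mem_nhds hx)] at ht
  obtain ⟨r, hr, hball⟩ := Metric.mem_nhds_iff.1 (inter_mem ht (hΩ.mem_nhds hx))
  exact ⟨r, L, hr, fun z hz => (hball hz).2, hL.mono (fun z hz => (hball hz).1)⟩

-- density of differentiability points
lemma exists_diff_pt {u : E → ℝ} {L : NNReal} {x : E} {r : ℝ}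
    (hL : LipschitzOnWith L u (ball x r)) {z : E} {η : ℝ} (hη : 0 < η)
    (hsub : ball z η ⊆ ball x r) :
    ∃ y ∈ ball z η, DifferentiableAt ℝ u y := by
  have hae := hL.ae_differentiableWithinAt_of_mem (μ := volume)
  have hpos : (0 : ENNReal) < volume (ball z η) := measure_ball_pos _ _ hη
  have hfreq : ∃ᵐ y ∂(volume : Measure E), y ∈ ball z η := by
    intro hcon
    have := ae_iff.1 hcon
    simp only [not_not, setOf_mem_eq] at this
    exact hpos.ne' this
  obtain ⟨y, hy, hdiff⟩ := (hfreq.and_eventually hae).exists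
  exact ⟨y, hy, (hdiff (hsub hy)).differentiableAt (isOpen_ball.mem_nhds (hsub hy))⟩

lemma reachGrad_subset_subdiff {Ω : Set E} (hΩ : IsOpen Ω) {u : E → ℝ}
    (hu : ConvexOn ℝ Ω u) {x : E} (hx : x ∈ Ω) :
    reachGrad Ω u x ⊆ subdiff Ω u x := by
  rintro p ⟨xk, g, hmem, hxk, hgrad, hg⟩ h hseg
  -- thickening of the segment
  have hcomp : IsCompact (segment ℝ x (x + h)) := by
    rw [segment_eq_image']
    exact isCompact_Icc.image (by continuity)
  obtain ⟨δ, hδ, hthick⟩ := hcomp.exists_thickening_subset_open hΩ hseg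
  -- eventually the translated segment is inside Ω
  have hev : ∀ᶠ k in atTop, dist (xk k) x < δ :=
    (tendsto_iff_dist_tendsto_zero.1 hxk).eventually_lt_const hδ |>.mono (by simp)
  have key : ∀ᶠ k in atTop, u (xk k) + ⟪g k, h⟫ ≤ u (xk k + h) := by
    filter_upwards [hev] with k hk
    apply grad_subgrad hu (hgrad k)
    intro z hz
    apply hthick
    have : z - (xk k - x) ∈ segment ℝ x (x + h) := by
      have := hz
      rw [segment_eq_image'] at this ⊢
      obtain ⟨θ, hθ, rfl⟩ := this
      exact ⟨θ, hθ, by module⟩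
    refine Metric.mem_thickening_iff.2 ⟨z - (xk k - x), this, ?_⟩
    rw [dist_eq_norm]
    simpa [dist_eq_norm] using hk
  -- continuity of u at x and x + h
  have hcont := hu.continuousOn hΩ
  have hxh : x + h ∈ Ω := hseg (right_mem_segment ℝ x (x + h))
  have hc1 : Tendsto (fun k => u (xk k)) atTop (𝓝 (u x)) :=
    ((hcont.continuousAt (hΩ.mem_nhds hx)).tendsto.comp hxk)
  have hc2 : Tendsto (fun k => u (xk k + h)) atTop (𝓝 (u (x + h))) := by
    have : Tendsto (fun k => xk k + h) atTop (𝓝 (x + h)) := hxk.add_const h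
    exact ((hcont.continuousAt (hΩ.mem_nhds hxh)).tendsto.comp this)
  have hc3 : Tendsto (fun k => u (xk k) + ⟪g k, h⟫) atTop (𝓝 (u x + ⟪p, h⟫)) := by
    refine hc1.add ?_
    exact ((continuous_id.inner continuous_const).tendsto p).comp hg
  exact le_of_tendsto_of_tendsto hc3 hc2 key

lemma subdiff_subset_closure {Ω : Set E} (hΩ : IsOpen Ω) {u : E → ℝ}
    (hu : ConvexOn ℝ Ω u) {x : E} (hx : x ∈ Ω) :
    subdiff Ω u x ⊆ closure (convexHull ℝ (reachGrad Ω u x)) := by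
  intro p hp
  by_contra hpc
  obtain ⟨f, c, hfC, hfp⟩ := geometric_hahn_banach_closed_point
    ((convex_convexHull ℝ _).closure) isClosed_closure hpc
  set w : E := (InnerProductSpace.toDual ℝ (EuclideanSpace ℝ (Fin n))).symm f with hw
  have hwval : ∀ z : E, ⟪w, z⟫ = f z := fun z => InnerProductSpace.toDual_symm_apply
  have hwq : ∀ q ∈ reachGrad Ω u x, ⟪w, q⟫ < c := by
    intro q hq
    rw [hwval]
    exact hfC q (subset_closure (subset_convexHull ℝ _ hq))
  have hwp : c < ⟪w, p⟫ := by rw [hwval]; exact hfp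
  obtain ⟨r, L, hr, hballΩ, hL⟩ := exists_lip hΩ hu hx
  -- Claim: all gradients near x satisfy ⟪w, g⟫ < c
  have claim : ∃ δ : ℝ, 0 < δ ∧ δ ≤ r / 2 ∧
      ∀ y g : E, dist y x < δ → HasGradientAt u g y → ⟪w, g⟫ < c := by
    by_contra hcon
    push_neg at hcon
    have hsel : ∀ k : ℕ, ∃ y g : E,
        dist y x < min (r / 2) (1 / (k + 1)) ∧ HasGradientAt u g y ∧ c ≤ ⟪w, g⟫ := by
      intro k
      have hpos : 0 < min (r / 2) (1 / ((k : ℝ) + 1)) := lt_min (by linarith) (by positivity)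
      obtain ⟨y, g, h1, h2, h3⟩ := hcon (min (r / 2) (1 / (k + 1))) hpos (min_le_left _ _)
      exact ⟨y, g, h1, h2, h3⟩
    choose y g h1 h2 h3 using hsel
    have hyball : ∀ k, y k ∈ ball x r := fun k =>
      mem_ball.2 (((h1 k).trans_le (min_le_left _ _)).trans_le (by linarith))
    have hyΩ : ∀ k, y k ∈ Ω := fun k => hballΩ (hyball k)
    have hyx : Tendsto y atTop (𝓝 x) := by
      rw [tendsto_iff_dist_tendsto_zero]
      apply squeeze_zero (fun k => dist_nonneg)
        (fun k => ((h1 k).trans_le (min_le_right _ _)).le)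
      exact tendsto_one_div_add_atTop_nhds_zero_nat
    have hgb : ∀ k, g k ∈ closedBall (0 : E) L := fun k => by
      rw [mem_closedBall, dist_zero_right]
      exact grad_bound hL (hyball k) (h2 k)
    obtain ⟨q, _, φ, hφ, hgq⟩ := tendsto_subseq_of_bounded isBounded_closedBall hgb
    have hqreach : q ∈ reachGrad Ω u x :=
      ⟨y ∘ φ, g ∘ φ, fun k => hyΩ _, hyx.comp hφ.tendsto_atTop, fun k => h2 _, hgq⟩
    have hlt := hwq q hqreach
    have hcle : c ≤ ⟪w, q⟫ := by
      have htd : Tendsto (fun k => ⟪w, (g ∘ φ) k⟫) atTop (𝓝 ⟪w, q⟫) :=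
        ((continuous_const.inner continuous_id).tendsto q).comp hgq
      exact ge_of_tendsto htd (Eventually.of_forall fun k => h3 (φ k))
    linarith
  obtain ⟨δ, hδ, hδr, hgradlt⟩ := claim
  set d : ℝ := ⟪w, p⟫ - c with hd
  have hd0 : 0 < d := by simp only [hd]; linarith
  set t : ℝ := δ / (2 * (‖w‖ + 1)) with htdef
  have ht : 0 < t := by positivity
  have htw : t * ‖w‖ < δ / 2 := by
    have hw1 : ‖w‖ < ‖w‖ + 1 := by linarith
    calc t * ‖w‖ < t * (‖w‖ + 1) := by
          exact mul_lt_mul_of_pos_left hw1 ht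
      _ = δ / 2 := by rw [htdef]; field_simp
  set η : ℝ := min (δ / 4) (t * d / (4 * (L : ℝ) + 4)) with hηdef
  have hη : 0 < η := lt_min (by linarith) (by positivity)
  have hη4 : η ≤ δ / 4 := min_le_left _ _
  have hηd : η ≤ t * d / (4 * (L : ℝ) + 4) := min_le_right _ _
  have hdxt : dist (x + t • w) x = t * ‖w‖ := by
    rw [dist_eq_norm, add_sub_cancel_left, norm_smul, Real.norm_eq_abs, abs_of_pos ht]
  -- ball around x + t • w lies in ball x r
  have hsub : ball (x + t • w) η ⊆ ball x r := by
    intro z hz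
    rw [mem_ball] at hz ⊢
    calc dist z x ≤ dist z (x + t • w) + dist (x + t • w) x := dist_triangle _ _ _
      _ < η + t * ‖w‖ := by rw [hdxt]; linarith
      _ < δ / 4 + δ / 2 := by linarith
      _ ≤ r := by linarith
  obtain ⟨y, hy, hydiff⟩ := exists_diff_pt hL hη hsub
  set g : E := gradient u y with hgdef
  have hgrad : HasGradientAt u g y := hydiff.hasGradientAt
  have hydist : dist y (x + t • w) < η := mem_ball.1 hy
  have hyx : dist y x < δ := by
    calc dist y x ≤ dist y (x + t • w) + dist (x + t • w) x := dist_triangle _ _ _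
      _ < η + t * ‖w‖ := by rw [hdxt]; linarith
      _ < δ / 4 + δ / 2 := by linarith
      _ < δ := by linarith
  have hgc : ⟪w, g⟫ < c := hgradlt y g hyx hgrad
  -- subgradient inequality at y in direction -(t • w)
  have hseg1 : segment ℝ y (y + -(t • w)) ⊆ Ω := by
    intro z hz
    apply hballΩ
    rw [segment_eq_image'] at hz
    obtain ⟨θ, hθ, rfl⟩ := hz
    rw [mem_ball, dist_eq_norm]
    have : y + θ • (y + -(t • w) - y) - x = (y - (x + t • w)) + (1 - θ) • (t • w) := by
      module
    rw [this]
    calc ‖(y - (x + t • w)) + (1 - θ) • (t • w)‖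
        ≤ ‖y - (x + t • w)‖ + ‖(1 - θ) • (t • w)‖ := norm_add_le _ _
      _ ≤ η + t * ‖w‖ := by
          refine add_le_add ?_ ?_
          · rw [← dist_eq_norm]; exact hydist.le
          · rw [norm_smul, norm_smul, Real.norm_eq_abs, Real.norm_eq_abs,
              abs_of_nonneg (by linarith [hθ.2] : (0:ℝ) ≤ 1 - θ), abs_of_pos ht]
            nlinarith [hθ.1, hθ.2, norm_nonneg w, ht,
              mul_nonneg hθ.1 (mul_nonneg ht.le (norm_nonneg w))]
      _ < δ / 4 + δ / 2 := by linarith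
      _ ≤ r := by linarith
  have hineq1 : u y + ⟪g, -(t • w)⟫ ≤ u (y + -(t • w)) := grad_subgrad hu hgrad hseg1
  -- subgradient inequality for p at x in direction t • w
  have hseg2 : segment ℝ x (x + t • w) ⊆ Ω := by
    intro z hz
    apply hballΩ
    rw [segment_eq_image'] at hz
    obtain ⟨θ, hθ, rfl⟩ := hz
    rw [mem_ball, dist_eq_norm, add_sub_cancel_left]
    have : x + t • w - x = t • w := by abel
    calc ‖θ • (x + t • w - x)‖ = ‖θ • (t • w)‖ := by rw [this]
      _ = θ * (t * ‖w‖) := by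
          rw [norm_smul, norm_smul, Real.norm_eq_abs, Real.norm_eq_abs,
            abs_of_nonneg hθ.1, abs_of_pos ht]
      _ ≤ t * ‖w‖ := mul_le_of_le_one_left (by positivity) hθ.2
      _ < δ / 2 := htw
      _ ≤ r := by linarith
  have hineq2 : u x + ⟪p, t • w⟫ ≤ u (x + t • w) := hp (t • w) hseg2
  -- Lipschitz estimates
  have hyball' : y ∈ ball x r := hsub hy
  have hytball : y + -(t • w) ∈ ball x r := by
    rw [mem_ball, dist_eq_norm]
    have : y + -(t • w) - x = y - (x + t • w) := by abel
    rw [this, ← dist_eq_norm]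
    calc dist y (x + t • w) < η := hydist
      _ < r := by linarith
  have hxball : x ∈ ball x r := mem_ball_self hr
  have hxtball : x + t • w ∈ ball x r := by
    rw [mem_ball, hdxt]
    linarith
  have hlip1 : |u y - u (x + t • w)| ≤ (L : ℝ) * η := by
    have := hL.dist_le_mul y hyball' (x + t • w) hxtball
    rw [Real.dist_eq] at this
    calc |u y - u (x + t • w)| ≤ (L : ℝ) * dist y (x + t • w) := this
      _ ≤ (L : ℝ) * η := mul_le_mul_of_nonneg_left hydist.le L.coe_nonneg
  have hlip2 : |u (y + -(t • w)) - u x| ≤ (L : ℝ) * η := by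
    have := hL.dist_le_mul (y + -(t • w)) hytball x hxball
    rw [Real.dist_eq] at this
    have hdd : dist (y + -(t • w)) x = dist y (x + t • w) := by
      rw [dist_eq_norm, dist_eq_norm]
      congr 1
      abel
    rw [hdd] at this
    calc |u (y + -(t • w)) - u x| ≤ (L : ℝ) * dist y (x + t • w) := this
      _ ≤ (L : ℝ) * η := mul_le_mul_of_nonneg_left hydist.le L.coe_nonneg
  -- combine everything
  have e1 : ⟪p, t • w⟫ = t * ⟪w, p⟫ := by
    rw [inner_smul_right, real_inner_comm]
  have e2 : ⟪g, -(t • w)⟫ = -(t * ⟪w, g⟫) := by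
    rw [inner_neg_right, inner_smul_right, real_inner_comm]
  rw [e1] at hineq2
  rw [e2] at hineq1
  have habs1 := abs_le.1 hlip1
  have habs2 := abs_le.1 hlip2
  -- t * ⟪w,p⟫ ≤ u (x+t•w) - u x ≤ u y + Lη - (u (y - t•w) - Lη) ≤ t⟪w,g⟫ + 2Lη < t*c + 2Lη
  have hfinal : t * ⟪w, p⟫ ≤ t * c + 2 * (L : ℝ) * η := by
    nlinarith [hineq1, hineq2, habs1.1, habs1.2, habs2.1, habs2.2,
      mul_lt_mul_of_pos_left hgc ht]
  have hLnn : (0:ℝ) ≤ (L : ℝ) := L.coe_nonneg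
  have h2Lη : 2 * (L : ℝ) * η < t * d := by
    have h1 : 2 * (L : ℝ) * η ≤ 2 * (L : ℝ) * (t * d / (4 * (L : ℝ) + 4)) := by
      apply mul_le_mul_of_nonneg_left hηd (by positivity)
    have h2 : 2 * (L : ℝ) * (t * d / (4 * (L : ℝ) + 4)) < t * d := by
      rw [div_eq_inv_mul]
      have hden : (0:ℝ) < 4 * (L : ℝ) + 4 := by positivity
      rw [show 2 * (L:ℝ) * ((4 * (L : ℝ) + 4)⁻¹ * (t * d)) =
        (2 * (L:ℝ) / (4 * (L : ℝ) + 4)) * (t * d) by field_simp]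
      have hlt1 : 2 * (L:ℝ) / (4 * (L : ℝ) + 4) < 1 := by
        rw [div_lt_one hden]; linarith
      calc (2 * (L:ℝ) / (4 * (L : ℝ) + 4)) * (t * d)
          < 1 * (t * d) := mul_lt_mul_of_pos_right hlt1 (mul_pos ht hd0)
        _ = t * d := one_mul _
    linarith
  have : t * ⟪w, p⟫ - t * c = t * d := by rw [hd]; ring
  linarith

end Aux

theorem subdiff_eq_closure_convexHull_reachGrad {n : ℕ}
    (Ω : Set (EuclideanSpace ℝ (Fin n))) (hΩ : IsOpen Ω)
    (u : EuclideanSpace ℝ (Fin n) → ℝ) (hu : ConvexOn ℝ Ω u)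
    (x : EuclideanSpace ℝ (Fin n)) (hx : x ∈ Ω) :
    subdiff Ω u x = closure (convexHull ℝ (reachGrad Ω u x)) := by
  apply Set.Subset.antisymm
  · exact subdiff_subset_closure hΩ hu hx
  · exact closure_minimal
      (convexHull_min (reachGrad_subset_subdiff hΩ hu hx) (subdiff_convex Ω u x))
      (subdiff_closed Ω u x)
end

section
/- Nonsmooth mean value theorem for convex functions: let u : Ω → ℝ be convex on an open set Ω ⊆ ℝⁿ. For every x ∈ Ω and h ∈ ℝⁿ with [x, x+h] ⊆ Ω, there exist t ∈ [0,1] and p ∈ ∂u(x + t·h) such that u(x+h) − u(x) = ⟨p, h⟩. -/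
open RealInnerProductSpace Filter Metric MeasureTheory Topology

set_option maxHeartbeats 1000000

theorem nonsmooth_mean_value {n : ℕ} (Ω : Set (EuclideanSpace ℝ (Fin n))) (hΩ : IsOpen Ω)
    (u : EuclideanSpace ℝ (Fin n) → ℝ) (hu : ConvexOn ℝ Ω u) (hc : ContinuousOn u Ω)
    (x : EuclideanSpace ℝ (Fin n)) (hx : x ∈ Ω)
    (h : EuclideanSpace ℝ (Fin n)) (hseg : segment ℝ x (x + h) ⊆ Ω) :
    ∃ t ∈ Set.Icc (0 : ℝ) 1, ∃ p ∈ subdiff Ω u (x + t • h),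
      u (x + h) - u x = ⟪p, h⟫ := by
  classical
  set s : ℝ := u (x + h) - u x with hs_def
  -- membership of the segment points
  have hmem : ∀ t : ℝ, t ∈ Set.Icc (0:ℝ) 1 → x + t • h ∈ Ω := by
    intro t ht
    apply hseg
    exact ⟨1 - t, t, by linarith [ht.2], ht.1, by ring, by module⟩
  -- the function along the line
  set φ : ℝ → ℝ := fun t => u (x + t • h) - s * t with hφ_def
  have hφcont : ContinuousOn φ (Set.Icc 0 1) := by
    apply ContinuousOn.sub
    · exact hc.comp (by fun_prop) hmem
    · fun_prop
  obtain ⟨t₁, ht₁, hmin₁⟩ :=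
    isCompact_Icc.exists_isMinOn (⟨0, by norm_num⟩ : (Set.Icc (0:ℝ) 1).Nonempty) hφcont
  have hφ0 : φ 0 = u x := by simp [hφ_def]
  have hφ1 : φ 1 = u x := by simp [hφ_def, hs_def]
  -- midpoint inequality
  have hmid : φ (1/2) ≤ u x := by
    have := hu.2 (hmem 0 (by norm_num)) (hmem 1 (by norm_num))
      (by norm_num : (0:ℝ) ≤ 1/2) (by norm_num : (0:ℝ) ≤ 1/2) (by norm_num)
    have heq : (1/2:ℝ) • (x + (0:ℝ) • h) + (1/2:ℝ) • (x + (1:ℝ) • h) = x + (1/2:ℝ) • h := by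
      module
    rw [heq] at this
    simp only [hφ_def, smul_eq_mul]
    simp only [zero_smul, add_zero, one_smul, smul_eq_mul] at this
    rw [hs_def]
    linarith
  -- choose an interior minimizer
  obtain ⟨t₀, ht₀, hmin⟩ :
      ∃ t₀ ∈ Set.Ioo (0:ℝ) 1, ∀ t ∈ Set.Icc (0:ℝ) 1, φ t₀ ≤ φ t := by
    by_cases hti : t₁ ∈ Set.Ioo (0:ℝ) 1
    · exact ⟨t₁, hti, fun t ht => hmin₁ ht⟩
    · refine ⟨1/2, by norm_num, fun t ht => ?_⟩
      have h01 : φ t₁ = u x := by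
        rw [Set.mem_Ioo, not_and_or, not_lt, not_lt] at hti
        rcases hti with h0 | h1
        · have ht0 : t₁ = 0 := le_antisymm h0 ht₁.1
          rw [ht0]; exact hφ0
        · have ht1 : t₁ = 1 := le_antisymm ht₁.2 h1
          rw [ht1]; exact hφ1
      calc φ (1/2) ≤ u x := hmid
        _ = φ t₁ := h01.symm
        _ ≤ φ t := hmin₁ ht
  set y : EuclideanSpace ℝ (Fin n) := x + t₀ • h with hy_def
  have hyΩ : y ∈ Ω := hmem t₀ ⟨ht₀.1.le, ht₀.2.le⟩
  set ε : ℝ := min t₀ (1 - t₀) with hε_def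
  have hε : 0 < ε := lt_min ht₀.1 (by linarith [ht₀.2])
  have hεt₀ : ε ≤ t₀ := min_le_left _ _
  have hεt₁ : ε ≤ 1 - t₀ := min_le_right _ _
  -- the open epigraph
  set Eset : Set (EuclideanSpace ℝ (Fin n) × ℝ) := {zr | zr.1 ∈ Ω ∧ u zr.1 < zr.2} with hE_def
  have hEopen : IsOpen Eset := by
    have : Eset = (Ω ×ˢ (Set.univ : Set ℝ)) ∩
        (fun zr : EuclideanSpace ℝ (Fin n) × ℝ => zr.2 - u zr.1) ⁻¹' Set.Ioi 0 := by
      ext ⟨z, r⟩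
      simp [hE_def, Set.mem_prod, sub_pos]
    rw [this]
    apply ContinuousOn.isOpen_inter_preimage
    · exact (continuous_snd.continuousOn).sub
        (hc.comp continuous_fst.continuousOn (fun q hq => hq.1))
    · exact hΩ.prod isOpen_univ
    · exact isOpen_Ioi
  have hEconv : Convex ℝ Eset := by
    rintro ⟨z₁, r₁⟩ ⟨hz₁, hr₁⟩ ⟨z₂, r₂⟩ ⟨hz₂, hr₂⟩ a b ha hb hab
    refine ⟨hu.1 hz₁ hz₂ ha hb hab, ?_⟩
    have h1 : u (a • z₁ + b • z₂) ≤ a * u z₁ + b * u z₂ := hu.2 hz₁ hz₂ ha hb hab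
    have h2 : a * u z₁ + b * u z₂ < a * r₁ + b * r₂ := by
      rcases ha.lt_or_eq with ha' | ha'
      · nlinarith [mul_lt_mul_of_pos_left hr₁ ha', mul_le_mul_of_nonneg_left hr₂.le hb]
      · have hb1 : b = 1 := by linarith
        rw [← ha', hb1]; simpa using hr₂
    calc u ((a • (z₁, r₁) + b • (z₂, r₂)).1) = u (a • z₁ + b • z₂) := rfl
      _ < a * r₁ + b * r₂ := lt_of_le_of_lt h1 h2
      _ = (a • (z₁, r₁) + b • (z₂, r₂)).2 := rfl
  -- the segment (graph of the affine minorant along the line)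
  set pa : EuclideanSpace ℝ (Fin n) × ℝ := (x + (t₀ - ε) • h, u y - s * ε) with hpa_def
  set pb : EuclideanSpace ℝ (Fin n) × ℝ := (x + (t₀ + ε) • h, u y + s * ε) with hpb_def
  set A : Set (EuclideanSpace ℝ (Fin n) × ℝ) := segment ℝ pa pb with hA_def
  have hkey_line : ∀ τ : ℝ, |τ| ≤ ε → u y + s * τ ≤ u (x + (t₀ + τ) • h) := by
    intro τ hτ
    rw [abs_le] at hτ
    have ht' : t₀ + τ ∈ Set.Icc (0:ℝ) 1 := ⟨by linarith, by linarith⟩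
    have := hmin (t₀ + τ) ht'
    simp only [hφ_def] at this
    have hyy : u y = u (x + t₀ • h) := by rw [hy_def]
    nlinarith
  have hdisj : Disjoint Eset A := by
    rw [Set.disjoint_left]
    rintro ⟨z, r⟩ ⟨hzΩ, hzr⟩ ⟨a, b, ha, hb, hab, heq⟩
    dsimp only at hzΩ hzr
    have hz : z = x + (t₀ + (b - a) * ε) • h := by
      have h1 : (a • pa + b • pb).1 = z := by rw [heq]
      simp only [hpa_def, hpb_def, Prod.fst_add, Prod.smul_fst] at h1
      rw [← h1]
      have hb' : b = 1 - a := by linarith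
      rw [hb']; module
    have hr : r = u y + s * ((b - a) * ε) := by
      have h1 : (a • pa + b • pb).2 = r := by rw [heq]
      simp only [hpa_def, hpb_def, Prod.snd_add, Prod.smul_snd, smul_eq_mul] at h1
      rw [← h1]
      have hb' : b = 1 - a := by linarith
      rw [hb']; ring
    have hτ : |(b - a) * ε| ≤ ε := by
      rw [abs_mul, abs_of_pos hε]
      have : |b - a| ≤ 1 := by rw [abs_le]; constructor <;> linarith
      nlinarith
    have := hkey_line ((b - a) * ε) hτ
    rw [hz, hr] at hzr
    linarith
  obtain ⟨f, C, hfE, hfA⟩ := geometric_hahn_banach_open hEconv hEopen (convex_segment pa pb) hdisj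
  set c' : ℝ := f (0, 1) with hc'_def
  have hf_eq : ∀ (z : EuclideanSpace ℝ (Fin n)) (r : ℝ), f (z, r) = f (z, 0) + r * c' := by
    intro z r
    have : (z, r) = (z, 0) + r • ((0 : EuclideanSpace ℝ (Fin n)), (1:ℝ)) := by
      simp [Prod.ext_iff]
    rw [this, f.map_add, f.map_smul, smul_eq_mul]
  have hfadd : ∀ z₁ z₂ : EuclideanSpace ℝ (Fin n), f (z₁ + z₂, 0) = f (z₁, 0) + f (z₂, 0) := by
    intro z₁ z₂
    have : ((z₁ + z₂ : EuclideanSpace ℝ (Fin n)), (0:ℝ)) = (z₁, 0) + (z₂, 0) := by simp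
    rw [this, f.map_add]
  have hfsmul : ∀ (c : ℝ) (z : EuclideanSpace ℝ (Fin n)), f (c • z, 0) = c * f (z, 0) := by
    intro c z
    have : ((c • z : EuclideanSpace ℝ (Fin n)), (0:ℝ)) = c • (z, (0:ℝ)) := by simp
    rw [this, f.map_smul, smul_eq_mul]
  -- (y, u y) ∈ A
  have hyA : ((y, u y) : EuclideanSpace ℝ (Fin n) × ℝ) ∈ A := by
    refine ⟨1/2, 1/2, by norm_num, by norm_num, by norm_num, ?_⟩
    simp only [hpa_def, hpb_def, Prod.ext_iff, Prod.fst_add, Prod.smul_fst, Prod.snd_add,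
      Prod.smul_snd, smul_eq_mul]
    constructor
    · rw [hy_def]; module
    · ring
  have hc'neg : c' < 0 := by
    have h1 : f (y, u y + 1) < C := hfE (y, u y + 1) ⟨hyΩ, by show u y < u y + 1; linarith⟩
    have h2 : C ≤ f (y, u y) := hfA (y, u y) hyA
    rw [hf_eq] at h1 h2
    linarith
  -- key inequality on Ω
  have hkey : ∀ z ∈ Ω, f (z, 0) + u z * c' ≤ C := by
    intro z hz
    apply le_of_forall_pos_le_add
    intro δ hδ
    have h1 : f (z, u z + δ / (-c')) < C :=
      hfE (z, u z + δ / (-c')) ⟨hz, by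
        show u z < u z + δ / (-c')
        have : 0 < δ / (-c') := div_pos hδ (by linarith)
        linarith⟩
    rw [hf_eq] at h1
    have hne : (-c') ≠ 0 := by intro hh; rw [neg_eq_zero] at hh; exact hc'neg.ne hh
    have h2 : δ / (-c') * c' = -δ := by
      linear_combination (-1 : ℝ) * div_mul_cancel₀ δ hne
    nlinarith [h1, h2]
  have hyC : C ≤ f (y, 0) + u y * c' := by
    have := hfA (y, u y) hyA
    rw [hf_eq] at this; linarith
  have hyCeq : f (y, 0) + u y * c' = C := le_antisymm (hkey y hyΩ) hyC
  -- value in direction h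
  have hgh : f (h, 0) = -(s * c') := by
    have hb' : C ≤ f (y, 0) + ε * f (h, 0) + u y * c' + s * ε * c' := by
      have := hfA pb (right_mem_segment ℝ pa pb)
      rw [hpb_def, hf_eq] at this
      have he : x + (t₀ + ε) • h = y + ε • h := by rw [hy_def]; module
      rw [he, hfadd, hfsmul] at this
      nlinarith [this]
    have ha' : C ≤ f (y, 0) - ε * f (h, 0) + u y * c' - s * ε * c' := by
      have := hfA pa (left_mem_segment ℝ pa pb)
      rw [hpa_def, hf_eq] at this
      have he : x + (t₀ - ε) • h = y + (-ε) • h := by rw [hy_def]; module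
      rw [he, hfadd, hfsmul] at this
      nlinarith [this]
    have e1 : 0 ≤ ε * (f (h, 0) + s * c') := by nlinarith [hb', hyCeq]
    have e2 : ε * (f (h, 0) + s * c') ≤ 0 := by nlinarith [ha', hyCeq]
    have e3 : ε * (f (h, 0) + s * c') = 0 := le_antisymm e2 e1
    rcases mul_eq_zero.mp e3 with he | he
    · exact absurd he hε.ne'
    · linarith
  -- the subgradient vector
  set G : EuclideanSpace ℝ (Fin n) →L[ℝ] ℝ := (-c')⁻¹ • (f.comp (ContinuousLinearMap.inl ℝ (EuclideanSpace ℝ (Fin n)) ℝ)) with hG_def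
  set p : EuclideanSpace ℝ (Fin n) := (InnerProductSpace.toDual ℝ (EuclideanSpace ℝ (Fin n))).symm G with hp_def
  have hp_inner : ∀ k : EuclideanSpace ℝ (Fin n), ⟪p, k⟫ = (-c')⁻¹ * f (k, 0) := by
    intro k
    rw [hp_def, InnerProductSpace.toDual_symm_apply]
    rw [hG_def]
    simp only [ContinuousLinearMap.smul_apply, ContinuousLinearMap.coe_comp',
      Function.comp_apply, ContinuousLinearMap.inl_apply, smul_eq_mul]
  have hc'ne : -c' > 0 := by linarith
  refine ⟨t₀, ⟨ht₀.1.le, ht₀.2.le⟩, p, ?_, ?_⟩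
  · intro k hk
    have hykΩ : y + k ∈ Ω := hk (right_mem_segment ℝ y (y + k))
    have h1 : f (y + k, 0) + u (y + k) * c' ≤ C := hkey (y + k) hykΩ
    rw [hfadd] at h1
    have h2 : f (k, 0) ≤ (u (y + k) - u y) * (-c') := by nlinarith [hyCeq]
    have h3 : ⟪p, k⟫ ≤ u (y + k) - u y := by
      rw [hp_inner]
      rw [inv_mul_le_iff₀ hc'ne]
      linarith [h2]
    linarith
  · have hc0 : c' ≠ 0 := hc'neg.ne
    rw [hp_inner, hgh, hs_def]
    field_simp
end

section
/- λ-mean value theorem: let u = U + P on an open set Ω ⊆ ℝⁿ, where U is convex and P is a polynomial of degree at most 2 with quadratic part P⁽²⁾, and set λ = max_{‖w‖=1} |P⁽²⁾(w)|. Then for every x ∈ Ω and h with [x, x+h] ⊆ Ω, there exist t ∈ [0,1] and p ∈ ∂^λ u(x + t·h) such that u(x+h) − u(x) = ⟨p, h⟩. -/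
open RealInnerProductSpace Filter Metric MeasureTheory Topology

private lemma cvx_comb {I : Set ℝ} {f : ℝ → ℝ} (hf : ConvexOn ℝ I f) {a c t : ℝ}
    (ha : a ∈ I) (hc : c ∈ I) (hac : a < c) (hat : a ≤ t) (htc : t ≤ c) :
    f t * (c - a) ≤ f a * (c - t) + f c * (t - a) := by
  have hca : (0:ℝ) < c - a := by linarith
  have h2 := hf.2 ha hc
    (show (0:ℝ) ≤ (c - t)/(c-a) from div_nonneg (by linarith) hca.le)
    (show (0:ℝ) ≤ (t - a)/(c-a) from div_nonneg (by linarith) hca.le)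
    (by field_simp; ring)
  rw [smul_eq_mul, smul_eq_mul] at h2
  have hpt : (c - t)/(c-a) * a + (t - a)/(c-a) * c = t := by field_simp; ring
  rw [hpt] at h2
  have h3 := mul_le_mul_of_nonneg_right h2 hca.le
  calc f t * (c-a) ≤ ((c - t)/(c-a) * f a + (t - a)/(c-a) * f c) * (c-a) := h3
    _ = f a * (c - t) + f c * (t - a) := by field_simp


private lemma locDec {Ψ : ℝ → ℝ} (hc : ContinuousOn Ψ (Set.Icc 0 1))
    (hloc : ∀ t, 0 ≤ t → t < 1 → ∃ δ > 0, ∀ τ, t < τ → τ ≤ t + δ → τ ≤ 1 → Ψ τ < Ψ t) :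
    Ψ 1 < Ψ 0 := by
  have key : ∀ a, 0 ≤ a → a ≤ 1 → ∀ b, a ≤ b → b ≤ 1 → Ψ b ≤ Ψ a := by
    intro a ha0 ha1 b hab hb1
    set S : Set ℝ := {t | t ∈ Set.Icc a b ∧ ∀ s, a ≤ s → s ≤ t → Ψ s ≤ Ψ a} with hS
    have haS : a ∈ S := ⟨⟨le_refl a, hab⟩, fun s hs1 hs2 => by
      have : s = a := le_antisymm hs2 hs1
      rw [this]⟩
    have hbdd : BddAbove S := ⟨b, fun t ht => ht.1.2⟩
    have hne : S.Nonempty := ⟨a, haS⟩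
    set T := sSup S with hT
    have hTa : a ≤ T := le_csSup hbdd haS
    have hTb : T ≤ b := csSup_le hne (fun t ht => ht.1.2)
    have hlt : ∀ s, a ≤ s → s < T → Ψ s ≤ Ψ a := by
      intro s hs hsT
      obtain ⟨t, htS, hst⟩ := exists_lt_of_lt_csSup hne hsT
      exact htS.2 s hs hst.le
    have hTle : Ψ T ≤ Ψ a := by
      rcases eq_or_lt_of_le hTa with heq | hlt'
      · rw [← heq]
      · by_contra hgt
        push_neg at hgt
        have hT01 : T ∈ Set.Icc (0:ℝ) 1 := ⟨le_trans ha0 hTa, le_trans hTb hb1⟩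
        have hev := (hc T hT01) (Ioi_mem_nhds hgt)
        rw [Filter.mem_map, mem_nhdsWithin] at hev
        obtain ⟨V, hVo, hTV, hVsub⟩ := hev
        obtain ⟨ε, hε, hball⟩ := Metric.isOpen_iff.mp hVo T hTV
        set s := max a (T - ε/2) with hs
        have hsa : a ≤ s := le_max_left _ _
        have hsT : s < T := max_lt hlt' (by linarith)
        have hs01 : s ∈ Set.Icc (0:ℝ) 1 := ⟨le_trans ha0 hsa, le_trans (le_trans hsT.le hTb) hb1⟩
        have hsball : s ∈ Metric.ball T ε := by
          rw [Metric.mem_ball, Real.dist_eq, abs_lt]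
          constructor
          · have : T - ε/2 ≤ s := le_max_right _ _
            linarith
          · linarith
        have : Ψ a < Ψ s := hVsub ⟨hball hsball, hs01⟩
        have := hlt s hsa hsT
        linarith
    have hTS : T ∈ S := by
      refine ⟨⟨hTa, hTb⟩, fun s hs1 hs2 => ?_⟩
      rcases lt_or_eq_of_le hs2 with hlt2 | heq
      · exact hlt s hs1 hlt2
      · rw [heq]; exact hTle
    have hTeqb : T = b := by
      by_contra hneq
      have hTltb : T < b := lt_of_le_of_ne hTb hneq
      have hT1 : T < 1 := lt_of_lt_of_le hTltb hb1
      obtain ⟨δ, hδ, hdec⟩ := hloc T (le_trans ha0 hTa) hT1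
      set m := min (T + δ) b with hm
      have hTm : T < m := lt_min (by linarith) hTltb
      have hmS : m ∈ S := by
        refine ⟨⟨le_trans hTa hTm.le, min_le_right _ _⟩, fun s hs1 hs2 => ?_⟩
        rcases le_or_gt s T with hsle | hsgt
        · exact hTS.2 s hs1 hsle
        · have h1 : s ≤ T + δ := le_trans hs2 (min_le_left _ _)
          have h2 : s ≤ 1 := le_trans (le_trans hs2 (min_le_right _ _)) hb1
          exact le_trans (hdec s hsgt h1 h2).le hTle
      have := le_csSup hbdd hmS
      rw [← hT] at this
      linarith
    rw [← hTeqb]; exact hTle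
  obtain ⟨δ₀, hδ₀, hdec₀⟩ := hloc 0 le_rfl one_pos
  set τ₀ := min δ₀ 1 with hτ₀
  have hτ₀pos : 0 < τ₀ := lt_min hδ₀ one_pos
  have hτ₀le1 : τ₀ ≤ 1 := min_le_right _ _
  have h1 : Ψ τ₀ < Ψ 0 := hdec₀ τ₀ hτ₀pos (by simp [hτ₀]) hτ₀le1
  have h2 : Ψ 1 ≤ Ψ τ₀ := key τ₀ hτ₀pos.le hτ₀le1 1 hτ₀le1 le_rfl
  linarith

private lemma locInc {Ψ : ℝ → ℝ} (hc : ContinuousOn Ψ (Set.Icc 0 1))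
    (hloc : ∀ t, 0 < t → t ≤ 1 → ∃ δ > 0, ∀ σ, σ < t → t - δ ≤ σ → 0 ≤ σ → Ψ σ < Ψ t) :
    Ψ 0 < Ψ 1 := by
  have := locDec (Ψ := fun s => Ψ (1 - s)) ?_ ?_
  · simpa using this
  · apply hc.comp (Continuous.continuousOn (by continuity))
    intro s hs
    constructor
    · simp only [Set.mem_Icc] at hs; linarith [hs.2]
    · simp only [Set.mem_Icc] at hs; linarith [hs.1]
  · intro t ht0 ht1
    obtain ⟨δ, hδ, hinc⟩ := hloc (1 - t) (by linarith) (by linarith)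
    refine ⟨δ, hδ, fun τ hτ1 hτ2 hτ3 => ?_⟩
    exact hinc (1 - τ) (by linarith) (by linarith) (by linarith)

set_option maxHeartbeats 2000000 in
private lemma oneD {I : Set ℝ} (hIo : IsOpen I) (hIc : Convex ℝ I) (h01 : Set.Icc (0:ℝ) 1 ⊆ I)
    {f : ℝ → ℝ} (hf : ConvexOn ℝ I f) (hfc : ContinuousOn f I) (hf01 : f 0 = f 1) (β : ℝ) :
    ∃ t ∈ Set.Icc (0:ℝ) 1, ∀ τ ∈ I, f t + β * (1 - 2*t) * (τ - t) ≤ f τ := by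
  have h0I : (0:ℝ) ∈ I := h01 ⟨le_rfl, zero_le_one⟩
  have h1I : (1:ℝ) ∈ I := h01 ⟨zero_le_one, le_rfl⟩
  rcases le_or_gt 0 β with hβ | hβ
  · -- β ≥ 0 : minimize K := f + β(τ² - τ)
    set K : ℝ → ℝ := fun τ => f τ + β * (τ^2 - τ) with hK
    have hKconv : ConvexOn ℝ I K := by
      refine ⟨hIc, fun p hp q hq a b ha hb hab => ?_⟩
      have h1 := hf.2 hp hq ha hb hab
      simp only [smul_eq_mul, hK] at h1 ⊢
      have hb' : b = 1 - a := by linarith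
      subst hb'
      nlinarith [h1, mul_nonneg (mul_nonneg hβ (mul_nonneg ha hb)) (sq_nonneg (p - q))]
    have hKc : ContinuousOn K (Set.Icc 0 1) :=
      (hfc.mono h01).add (Continuous.continuousOn (by continuity))
    obtain ⟨t, ht, hmin⟩ := isCompact_Icc.exists_isMinOn (Set.nonempty_Icc.mpr zero_le_one) hKc
    have hKmin : ∀ τ ∈ Set.Icc (0:ℝ) 1, K t ≤ K τ := fun τ hτ => hmin hτ
    have hK01 : K 0 = K 1 := by simp [hK]; linarith [hf01]
    have htI : t ∈ I := h01 ht
    have hglob : ∀ τ ∈ I, K t ≤ K τ := by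
      intro τ hτ
      rcases le_or_gt τ 1 with hτ1 | hτ1
      · rcases le_or_gt 0 τ with hτ0 | hτ0
        · exact hKmin τ ⟨hτ0, hτ1⟩
        · have h2 := cvx_comb hKconv hτ h1I (by linarith : τ < 1) (le_of_lt hτ0) zero_le_one
          have hK0 : K t ≤ K 0 := hKmin 0 ⟨le_rfl, zero_le_one⟩
          rw [← hK01] at h2
          nlinarith [h2]
      · have h2 := cvx_comb hKconv h0I hτ (by linarith : (0:ℝ) < τ) zero_le_one hτ1.le
        have hK1le : K t ≤ K 1 := hKmin 1 ⟨zero_le_one, le_rfl⟩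
        rw [hK01] at h2
        nlinarith [h2]
    refine ⟨t, ht, fun τ hτ => ?_⟩
    rcases lt_trichotomy τ t with hlt | heq | hgt
    · -- τ < t
      refine le_of_forall_pos_le_add fun η hη => ?_
      have httau : 0 < t - τ := by linarith
      set δ := min (t - τ) (η / ((β+1) * (t - τ))) with hδdef
      have hδpos : 0 < δ := lt_min httau (div_pos hη (mul_pos (by linarith) httau))
      have hδle : δ ≤ t - τ := min_le_left _ _
      have hστ : τ ≤ t - δ := by linarith
      have hσt : t - δ < t := by linarith
      have hσI : t - δ ∈ I := hIc.ordConnected.out hτ htI ⟨hστ, hσt.le⟩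
      have hKσ := hglob (t - δ) hσI
      have h1 : β * (1 - 2*t) * (-δ) - β * δ^2 ≤ f (t - δ) - f t := by
        simp only [hK] at hKσ; nlinarith [hKσ]
      have h2 := cvx_comb hf hτ htI (by linarith : τ < t) hστ hσt.le
      -- h2 : f (t-δ) * (t - τ) ≤ f τ * (t - (t-δ)) + f t * ((t-δ) - τ)
      have h3 : β * δ * (t - τ) ≤ η := by
        have hd2 : δ ≤ η / ((β+1) * (t - τ)) := min_le_right _ _
        have h4 : δ * ((β+1) * (t - τ)) ≤ η := by
          rw [← le_div_iff₀ (by positivity)]; exact hd2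
        nlinarith [mul_nonneg hβ hδpos.le, mul_pos hδpos httau]
      have h5 : (f t - f τ) * δ ≤ (f t - f (t - δ)) * (t - τ) := by nlinarith [h2]
      have h7 : (f t - f τ) * δ ≤ ((β * (1-2*t)) * δ + β * δ^2) * (t - τ) := by
        nlinarith [h5, h1, httau]
      have h8 : f t - f τ ≤ (β * (1-2*t)) * (t - τ) + β * δ * (t - τ) := by
        have h9 : (f t - f τ) * δ ≤ ((β * (1-2*t)) * (t - τ) + β * δ * (t-τ)) * δ := by
          nlinarith [h7]
        exact le_of_mul_le_mul_right h9 hδpos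
      nlinarith [h8, h3]
    · subst heq; simp
    · -- τ > t
      refine le_of_forall_pos_le_add fun η hη => ?_
      have httau : 0 < τ - t := by linarith
      set δ := min (τ - t) (η / ((β+1) * (τ - t))) with hδdef
      have hδpos : 0 < δ := lt_min httau (div_pos hη (mul_pos (by linarith) httau))
      have hδle : δ ≤ τ - t := min_le_left _ _
      have hστ : t + δ ≤ τ := by linarith
      have hσt : t < t + δ := by linarith
      have hσI : t + δ ∈ I := hIc.ordConnected.out htI hτ ⟨hσt.le, hστ⟩
      have hKσ := hglob (t + δ) hσI
      have h1 : β * (1 - 2*t) * δ - β * δ^2 ≤ f (t + δ) - f t := by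
        simp only [hK] at hKσ; nlinarith [hKσ]
      have h2 := cvx_comb hf htI hτ (by linarith : t < τ) hσt.le hστ
      -- h2 : f (t+δ) * (τ - t) ≤ f t * (τ - (t+δ)) + f τ * ((t+δ) - t)
      have h3 : β * δ * (τ - t) ≤ η := by
        have hd2 : δ ≤ η / ((β+1) * (τ - t)) := min_le_right _ _
        have h4 : δ * ((β+1) * (τ - t)) ≤ η := by
          rw [← le_div_iff₀ (by positivity)]; exact hd2
        nlinarith [mul_nonneg hβ hδpos.le, mul_pos hδpos httau]
      have h5 : (f (t + δ) - f t) * (τ - t) ≤ (f τ - f t) * δ := by nlinarith [h2]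
      have h7 : ((β * (1-2*t)) * δ - β * δ^2) * (τ - t) ≤ (f τ - f t) * δ := by
        nlinarith [h5, h1, httau]
      have h8 : (β * (1-2*t)) * (τ - t) - β * δ * (τ - t) ≤ f τ - f t := by
        have h9 : ((β * (1-2*t)) * (τ - t) - β * δ * (τ-t)) * δ ≤ (f τ - f t) * δ := by
          nlinarith [h7]
        exact le_of_mul_le_mul_right h9 hδpos
      nlinarith [h8, h3]
  · -- β < 0 : connectedness argument
    by_contra hcon
    push_neg at hcon
    set A : Set ℝ := {t | t ∈ I ∧ ∃ σ ∈ I, σ < t ∧ β*(1-2*t)*(t-σ) < f t - f σ} with hA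
    set B : Set ℝ := {t | t ∈ I ∧ ∃ τ ∈ I, t < τ ∧ f τ - f t < β*(1-2*t)*(τ-t)} with hB
    have hAopen : IsOpen A := by
      have hrw : A = ⋃ σ : ℝ, {t | σ ∈ I ∧ t ∈ I ∧ σ < t ∧ 0 < f t - f σ - β*(1-2*t)*(t-σ)} := by
        ext t
        simp only [hA, Set.mem_setOf_eq, Set.mem_iUnion]
        constructor
        · rintro ⟨htI, σ, hσI, hσt, hineq⟩; exact ⟨σ, hσI, htI, hσt, by linarith⟩
        · rintro ⟨σ, hσI, htI, hσt, hineq⟩; exact ⟨htI, σ, hσI, hσt, by linarith⟩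
      rw [hrw]
      refine isOpen_iUnion fun σ => ?_
      by_cases hσI : σ ∈ I
      · have hrw2 : {t | σ ∈ I ∧ t ∈ I ∧ σ < t ∧ 0 < f t - f σ - β*(1-2*t)*(t-σ)}
            = (I ∩ (fun t => f t - f σ - β*(1-2*t)*(t-σ)) ⁻¹' Set.Ioi 0) ∩ Set.Ioi σ := by
          ext t
          simp only [Set.mem_setOf_eq, Set.mem_inter_iff, Set.mem_preimage, Set.mem_Ioi]
          tauto
        rw [hrw2]
        refine IsOpen.inter ?_ isOpen_Ioi
        refine ContinuousOn.isOpen_inter_preimage ?_ hIo isOpen_Ioi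
        exact (hfc.sub continuousOn_const).sub (Continuous.continuousOn (by continuity))
      · have hrw2 : {t | σ ∈ I ∧ t ∈ I ∧ σ < t ∧ 0 < f t - f σ - β*(1-2*t)*(t-σ)} = ∅ := by
          ext t; simp [hσI]
        rw [hrw2]; exact isOpen_empty
    have hBopen : IsOpen B := by
      have hrw : B = ⋃ τ : ℝ, {t | τ ∈ I ∧ t ∈ I ∧ t < τ ∧ 0 < β*(1-2*t)*(τ-t) - (f τ - f t)} := by
        ext t
        simp only [hB, Set.mem_setOf_eq, Set.mem_iUnion]
        constructor
        · rintro ⟨htI, τ, hτI, htτ, hineq⟩; exact ⟨τ, hτI, htI, htτ, by linarith⟩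
        · rintro ⟨τ, hτI, htI, htτ, hineq⟩; exact ⟨htI, τ, hτI, htτ, by linarith⟩
      rw [hrw]
      refine isOpen_iUnion fun τ => ?_
      by_cases hτI : τ ∈ I
      · have hrw2 : {t | τ ∈ I ∧ t ∈ I ∧ t < τ ∧ 0 < β*(1-2*t)*(τ-t) - (f τ - f t)}
            = (I ∩ (fun t => β*(1-2*t)*(τ-t) - (f τ - f t)) ⁻¹' Set.Ioi 0) ∩ Set.Iio τ := by
          ext t
          simp only [Set.mem_setOf_eq, Set.mem_inter_iff, Set.mem_preimage, Set.mem_Ioi,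
            Set.mem_Iio]
          tauto
        rw [hrw2]
        refine IsOpen.inter ?_ isOpen_Iio
        refine ContinuousOn.isOpen_inter_preimage ?_ hIo isOpen_Ioi
        exact (Continuous.continuousOn (by continuity)).sub (continuousOn_const.sub hfc)
      · have hrw2 : {t | τ ∈ I ∧ t ∈ I ∧ t < τ ∧ 0 < β*(1-2*t)*(τ-t) - (f τ - f t)} = ∅ := by
          ext t; simp [hτI]
        rw [hrw2]; exact isOpen_empty
    have hdisj : Disjoint A B := by
      rw [Set.disjoint_left]
      rintro t ⟨htI, σ, hσI, hσt, hA'⟩ ⟨_, τ, hτI, htτ, hB'⟩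
      have h3 := cvx_comb hf hσI hτI (by linarith : σ < τ) hσt.le htτ.le
      nlinarith [h3, mul_lt_mul_of_pos_right hA' (sub_pos.mpr htτ),
        mul_lt_mul_of_pos_right hB' (sub_pos.mpr hσt)]
    have hcover : Set.Icc (0:ℝ) 1 ⊆ A ∪ B := by
      intro t ht
      obtain ⟨τ, hτI, hτlt⟩ := hcon t ht
      have htI : t ∈ I := h01 ht
      rcases lt_trichotomy τ t with hcase | hcase | hcase
      · left; exact ⟨htI, τ, hτI, hcase, by nlinarith [hτlt]⟩
      · rw [hcase] at hτlt; simp at hτlt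
      · right; exact ⟨htI, τ, hτI, hcase, by nlinarith [hτlt]⟩
    set Ψ : ℝ → ℝ := fun τ => f τ - β * (τ - τ^2) with hΨ
    have hΨc : ContinuousOn Ψ (Set.Icc 0 1) :=
      (hfc.mono h01).sub (Continuous.continuousOn (by continuity))
    have hΨ0 : Ψ 0 = f 0 := by simp [hΨ]
    have hΨ1 : Ψ 1 = f 1 := by norm_num [hΨ]
    rcases isPreconnected_Icc.subset_or_subset hAopen hBopen hdisj hcover with hAll | hAll
    · -- [0,1] ⊆ A : Ψ strictly increasing, contradiction
      have hcontr : Ψ 0 < Ψ 1 := by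
        refine locInc hΨc fun t ht0 ht1 => ?_
        obtain ⟨htI, σt, hσtI, hσtt, hAt⟩ := hAll ⟨ht0.le, ht1⟩
        refine ⟨t - σt, by linarith, fun σ' hσ'1 hσ'2 hσ'3 => ?_⟩
        have hσ'I : σ' ∈ I := hIc.ordConnected.out hσtI htI ⟨by linarith, hσ'1.le⟩
        have h5 := cvx_comb hf hσtI htI hσtt (by linarith) hσ'1.le
        -- h5 : f σ' * (t - σt) ≤ f σt * (t - σ') + f t * (σ' - σt)
        have h7 : (β*(1-2*t)*(t-σ')) * (t - σt) < (f t - f σ') * (t - σt) := by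
          nlinarith [h5, mul_lt_mul_of_pos_right hAt (sub_pos.mpr hσ'1)]
        have h8 : β*(1-2*t)*(t-σ') < f t - f σ' :=
          lt_of_mul_lt_mul_right h7 (by linarith : (0:ℝ) ≤ t - σt)
        simp only [hΨ]
        nlinarith [h8, mul_nonneg (neg_nonneg.mpr hβ.le) (sq_nonneg (t - σ'))]
      linarith [hΨ0, hΨ1, hf01]
    · -- [0,1] ⊆ B : Ψ strictly decreasing, contradiction
      have hcontr : Ψ 1 < Ψ 0 := by
        refine locDec hΨc fun t ht0 ht1 => ?_
        obtain ⟨htI, τt, hτtI, htτt, hBt⟩ := hAll ⟨ht0, ht1.le⟩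
        refine ⟨τt - t, by linarith, fun τ' hτ'1 hτ'2 hτ'3 => ?_⟩
        have hτ'I : τ' ∈ I := hIc.ordConnected.out htI hτtI ⟨hτ'1.le, by linarith⟩
        have h5 := cvx_comb hf htI hτtI htτt hτ'1.le (by linarith)
        -- h5 : f τ' * (τt - t) ≤ f t * (τt - τ') + f τt * (τ' - t)
        have h7 : (f τ' - f t) * (τt - t) < (β*(1-2*t)*(τ'-t)) * (τt - t) := by
          nlinarith [h5, mul_lt_mul_of_pos_right hBt (sub_pos.mpr hτ'1)]
        have h8 : f τ' - f t < β*(1-2*t)*(τ'-t) :=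
          lt_of_mul_lt_mul_right h7 (by linarith : (0:ℝ) ≤ τt - t)
        simp only [hΨ]
        nlinarith [h8, mul_nonneg (neg_nonneg.mpr hβ.le) (sq_nonneg (τ' - t))]
      linarith [hΨ0, hΨ1, hf01]

variable {n : ℕ}

set_option maxHeartbeats 4000000 in
private lemma exists_subgrad {Ω : Set (EuclideanSpace ℝ (Fin n))} (hΩ : IsOpen Ω)
    {W : EuclideanSpace ℝ (Fin n) → ℝ} (hW : ConvexOn ℝ Ω W)
    {y : EuclideanSpace ℝ (Fin n)} (hy : y ∈ Ω) (h : EuclideanSpace ℝ (Fin n)) (s : ℝ)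
    (hA : ∀ ε : ℝ, 0 < ε → y + ε • h ∈ Ω → W y + ε * s ≤ W (y + ε • h))
    (hB : ∀ ε : ℝ, 0 < ε → y + ε • (-h) ∈ Ω → W y - ε * s ≤ W (y + ε • (-h))) :
    ∃ p : EuclideanSpace ℝ (Fin n),
      (∀ k, y + k ∈ Ω → W y + ⟪p, k⟫ ≤ W (y + k)) ∧ ⟪p, h⟫ = s := by
  classical
  set Sl : EuclideanSpace ℝ (Fin n) → Set ℝ :=
    fun k => (fun ε => (W (y + ε • k) - W y)/ε) '' {ε : ℝ | 0 < ε ∧ y + ε • k ∈ Ω} with hSl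
  have hsmall : ∀ k : EuclideanSpace ℝ (Fin n), ∃ ε : ℝ, 0 < ε ∧ y + ε • k ∈ Ω := by
    intro k
    obtain ⟨r, hr, hball⟩ := Metric.isOpen_iff.mp hΩ y hy
    refine ⟨r/(2*(‖k‖+1)), by positivity, hball ?_⟩
    rw [Metric.mem_ball, dist_eq_norm, add_sub_cancel_left, norm_smul, Real.norm_eq_abs,
      abs_of_pos (by positivity)]
    rw [div_mul_eq_mul_div, div_lt_iff₀ (by positivity)]
    nlinarith [norm_nonneg k, hr]
  have hne : ∀ k, (Sl k).Nonempty := by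
    intro k
    obtain ⟨ε, hε, hm⟩ := hsmall k
    exact ⟨_, ⟨ε, ⟨hε, hm⟩, rfl⟩⟩
  have hseg : ∀ (k : EuclideanSpace ℝ (Fin n)) (e e' : ℝ),
      0 < e → e ≤ e' → y + e' • k ∈ Ω → y + e • k ∈ Ω := by
    intro k e e' he hee' hm
    rcases eq_or_lt_of_le hee' with rfl | hlt
    · exact hm
    have he' : 0 < e' := lt_trans he hlt
    have hpt : (1 - e/e') • y + (e/e') • (y + e' • k) = y + e • k := by
      match_scalars <;> field_simp <;> ring
    have hmem := hW.1 hy hm (show (0:ℝ) ≤ 1 - e/e' by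
        rw [sub_nonneg]; exact (div_le_one he').mpr hee')
      (show (0:ℝ) ≤ e/e' from le_of_lt (div_pos he he')) (by ring)
    rwa [hpt] at hmem
  have hmono : ∀ (k : EuclideanSpace ℝ (Fin n)) (e e' : ℝ), 0 < e → e ≤ e' → y + e' • k ∈ Ω →
      (W (y + e • k) - W y)/e ≤ (W (y + e' • k) - W y)/e' := by
    intro k e e' he hee' hm
    rcases eq_or_lt_of_le hee' with rfl | hlt
    · exact le_refl _
    have he' : 0 < e' := lt_trans he hlt
    have hpt : (1 - e/e') • y + (e/e') • (y + e' • k) = y + e • k := by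
      match_scalars <;> field_simp <;> ring
    have hcv := hW.2 hy hm (show (0:ℝ) ≤ 1 - e/e' by
        rw [sub_nonneg]; exact (div_le_one he').mpr hee')
      (show (0:ℝ) ≤ e/e' from le_of_lt (div_pos he he')) (by ring)
    rw [hpt, smul_eq_mul, smul_eq_mul] at hcv
    rw [div_le_div_iff₀ he he']
    have hcv2 := mul_le_mul_of_nonneg_right hcv he'.le
    have hid : ((1 - e / e') * W y + e / e' * W (y + e' • k)) * e'
        = (e' - e) * W y + e * W (y + e' • k) := by
      field_simp <;> ring
    rw [hid] at hcv2
    nlinarith [hcv2]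
  have hbdd : ∀ k, BddBelow (Sl k) := by
    intro k
    obtain ⟨ε₀, hε₀, hm₀⟩ := hsmall (-k)
    refine ⟨(W y - W (y + ε₀ • (-k)))/ε₀, ?_⟩
    rintro v ⟨ε, ⟨hε, hm⟩, rfl⟩
    have hsum : 0 < ε + ε₀ := by linarith
    have hpt : (ε₀/(ε+ε₀)) • (y + ε • k) + (ε/(ε+ε₀)) • (y + ε₀ • (-k)) = y := by
      match_scalars <;> field_simp <;> ring
    have hcv := hW.2 hm hm₀ (show (0:ℝ) ≤ ε₀/(ε+ε₀) from le_of_lt (div_pos hε₀ hsum))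
      (show (0:ℝ) ≤ ε/(ε+ε₀) from le_of_lt (div_pos hε hsum)) (by field_simp <;> ring)
    rw [hpt, smul_eq_mul, smul_eq_mul] at hcv
    have hcv2 := mul_le_mul_of_nonneg_right hcv hsum.le
    have hid : (ε₀ / (ε + ε₀) * W (y + ε • k) + ε / (ε + ε₀) * W (y + ε₀ • (-k))) * (ε + ε₀)
        = ε₀ * W (y + ε • k) + ε * W (y + ε₀ • (-k)) := by
      field_simp <;> ring
    rw [hid] at hcv2
    rw [div_le_div_iff₀ hε₀ hε]
    nlinarith [hcv2]
  -- the sublinear functional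
  set N : EuclideanSpace ℝ (Fin n) → ℝ := fun k => sInf (Sl k) with hN
  have hNle : ∀ k (ε : ℝ), 0 < ε → y + ε • k ∈ Ω → N k ≤ (W (y + ε • k) - W y)/ε :=
    fun k ε hε hm => csInf_le (hbdd k) ⟨ε, ⟨hε, hm⟩, rfl⟩
  have hleN : ∀ k (c : ℝ), (∀ ε : ℝ, 0 < ε → y + ε • k ∈ Ω → c ≤ (W (y + ε • k) - W y)/ε) →
      c ≤ N k := by
    intro k c hc
    refine le_csInf (hne k) ?_
    rintro v ⟨ε, ⟨hε, hm⟩, rfl⟩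
    exact hc ε hε hm
  have hN0 : (0:ℝ) ≤ N 0 := by
    refine hleN 0 0 fun ε hε hm => ?_
    simp
  -- positive homogeneity
  have hom_half : ∀ (c : ℝ), 0 < c → ∀ k, c * N k ≤ N (c • k) := by
    intro c hc k
    refine hleN _ _ fun ε hε hm => ?_
    have hm' : y + (ε*c) • k ∈ Ω := by rwa [← smul_smul]
    have h1 : N k ≤ (W (y + (ε*c) • k) - W y)/(ε*c) := hNle k (ε*c) (mul_pos hε hc) hm'
    have hpteq : y + ε • (c • k) = y + (ε*c) • k := by rw [smul_smul]
    rw [hpteq]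
    calc c * N k ≤ c * ((W (y + (ε*c) • k) - W y)/(ε*c)) :=
          mul_le_mul_of_nonneg_left h1 hc.le
      _ = (W (y + (ε*c) • k) - W y)/ε := by
          rw [eq_div_iff (ne_of_gt hε)]
          field_simp
  have hom : ∀ (c : ℝ), 0 < c → ∀ k, N (c • k) = c * N k := by
    intro c hc k
    refine le_antisymm ?_ (hom_half c hc k)
    have h2 := hom_half c⁻¹ (inv_pos.mpr hc) (c • k)
    rw [smul_smul, inv_mul_cancel₀ (ne_of_gt hc), one_smul] at h2
    calc N (c • k) = c * (c⁻¹ * N (c • k)) := by field_simp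
      _ ≤ c * N k := mul_le_mul_of_nonneg_left h2 hc.le
  -- subadditivity
  have hadd : ∀ k₁ k₂, N (k₁ + k₂) ≤ N k₁ + N k₂ := by
    intro k₁ k₂
    refine le_of_forall_pos_le_add fun η hη => ?_
    obtain ⟨v₁, hv₁mem, hv₁⟩ := Real.lt_sInf_add_pos (hne k₁) (half_pos hη)
    obtain ⟨v₂, hv₂mem, hv₂⟩ := Real.lt_sInf_add_pos (hne k₂) (half_pos hη)
    obtain ⟨ε₁, ⟨hε₁, hm₁⟩, rfl⟩ := hv₁mem
    obtain ⟨ε₂, ⟨hε₂, hm₂⟩, rfl⟩ := hv₂mem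
    set ε := min ε₁ ε₂ / 2 with hε
    have hεpos : 0 < ε := by positivity
    have h2ε₁ : 2*ε ≤ ε₁ := by
      have := min_le_left ε₁ ε₂; simp only [hε]; linarith
    have h2ε₂ : 2*ε ≤ ε₂ := by
      have := min_le_right ε₁ ε₂; simp only [hε]; linarith
    have hm₁' : y + (2*ε) • k₁ ∈ Ω := hseg k₁ (2*ε) ε₁ (by linarith) h2ε₁ hm₁
    have hm₂' : y + (2*ε) • k₂ ∈ Ω := hseg k₂ (2*ε) ε₂ (by linarith) h2ε₂ hm₂
    have hptm : (1/2 : ℝ) • (y + (2*ε) • k₁) + (1/2 : ℝ) • (y + (2*ε) • k₂)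
        = y + ε • (k₁ + k₂) := by
      match_scalars <;> field_simp <;> ring
    have hmid : y + ε • (k₁ + k₂) ∈ Ω := by
      have := hW.1 hm₁' hm₂' (by norm_num : (0:ℝ) ≤ 1/2) (by norm_num : (0:ℝ) ≤ 1/2)
        (by norm_num)
      rwa [hptm] at this
    have hcv := hW.2 hm₁' hm₂' (by norm_num : (0:ℝ) ≤ 1/2) (by norm_num : (0:ℝ) ≤ 1/2)
      (by norm_num)
    rw [hptm, smul_eq_mul, smul_eq_mul] at hcv
    have step1 : N (k₁ + k₂) ≤ (W (y + ε • (k₁+k₂)) - W y)/ε := hNle _ ε hεpos hmid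
    have step2 : (W (y + ε • (k₁+k₂)) - W y)/ε
        ≤ (W (y + (2*ε) • k₁) - W y)/(2*ε) + (W (y + (2*ε) • k₂) - W y)/(2*ε) := by
      rw [← add_div, div_le_div_iff₀ hεpos (by linarith : (0:ℝ) < 2*ε)]
      nlinarith [hcv]
    have step3 : (W (y + (2*ε) • k₁) - W y)/(2*ε) ≤ (W (y + ε₁ • k₁) - W y)/ε₁ :=
      hmono k₁ (2*ε) ε₁ (by linarith) h2ε₁ hm₁
    have step4 : (W (y + (2*ε) • k₂) - W y)/(2*ε) ≤ (W (y + ε₂ • k₂) - W y)/ε₂ :=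
      hmono k₂ (2*ε) ε₂ (by linarith) h2ε₂ hm₂
    have e1 : N k₁ = sInf (Sl k₁) := rfl
    have e2 : N k₂ = sInf (Sl k₂) := rfl
    linarith [step1, step2, step3, step4, hv₁, hv₂, e1.le, e1.ge, e2.le, e2.ge]
  -- N dominates s on the line through h, and -s on -h
  have hsleN : s ≤ N h := by
    refine hleN h s fun ε hε hm => ?_
    rw [le_div_iff₀ hε]
    have := hA ε hε hm
    linarith
  have hsleN' : -s ≤ N (-h) := by
    refine hleN (-h) (-s) fun ε hε hm => ?_
    rw [le_div_iff₀ hε]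
    have := hB ε hε hm
    linarith
  -- Hahn-Banach
  have main : ∃ g : EuclideanSpace ℝ (Fin n) →ₗ[ℝ] ℝ, (∀ k, g k ≤ N k) ∧ g h = s := by
    by_cases hh : h = 0
    · have hs0 : s = 0 := by
        have h1 := hA 1 one_pos (by rw [hh]; simpa using hy)
        have h2 := hB 1 one_pos (by rw [hh]; simpa using hy)
        rw [hh] at h1 h2
        simp only [smul_zero, add_zero, neg_zero, one_mul] at h1 h2
        linarith
      obtain ⟨g, hg1, hg2⟩ := exists_extension_of_le_sublinear ⟨⊥, 0⟩ N
        (fun c hc x => hom c hc x) hadd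
        (fun x => by
          have hx0 : (x : EuclideanSpace ℝ (Fin n)) = 0 := (Submodule.mem_bot ℝ).mp x.2
          simp only [LinearPMap.mk_apply, LinearMap.zero_apply]
          rw [hx0]
          exact hN0)
      refine ⟨g, hg2, ?_⟩
      rw [hh, hs0, map_zero]
    · have hfle : ∀ x : (LinearPMap.mkSpanSingleton (K := ℝ) (σ := RingHom.id ℝ) h s hh).domain,
          (LinearPMap.mkSpanSingleton (K := ℝ) (σ := RingHom.id ℝ) h s hh) x ≤ N x := by
        rintro ⟨z, hz⟩
        obtain ⟨a, ha⟩ := Submodule.mem_span_singleton.mp hz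
        have hz' : z = a • h := ha.symm
        subst hz'
        have happ : (LinearPMap.mkSpanSingleton (K := ℝ) (σ := RingHom.id ℝ) h s hh) ⟨a • h, hz⟩ = a • s :=
          LinearPMap.mkSpanSingleton'_apply h s _ a hz
        rw [happ, smul_eq_mul]
        show a * s ≤ N (a • h)
        rcases lt_trichotomy a 0 with hneg | hzero | hpos
        · have hrw : a • h = (-a) • (-h) := by rw [smul_neg, neg_smul, neg_neg]
          have h1 : (-a) * N (-h) ≤ N ((-a) • (-h)) := (hom (-a) (by linarith) (-h)).ge
          have h2 : (-a) * (-s) ≤ (-a) * N (-h) :=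
            mul_le_mul_of_nonneg_left hsleN' (by linarith)
          rw [hrw]
          calc a * s = (-a) * (-s) := by ring
            _ ≤ N ((-a) • (-h)) := le_trans h2 h1
        · subst hzero
          simp only [zero_mul, zero_smul]
          exact hN0
        · have h1 : a * N h ≤ N (a • h) := (hom a hpos h).ge
          have h2 : a * s ≤ a * N h := mul_le_mul_of_nonneg_left hsleN hpos.le
          exact le_trans h2 h1
      obtain ⟨g, hg1, hg2⟩ := exists_extension_of_le_sublinear
        (LinearPMap.mkSpanSingleton (K := ℝ) (σ := RingHom.id ℝ) h s hh) N (fun c hc x => hom c hc x) hadd hfle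
      refine ⟨g, hg2, ?_⟩
      have hdom : h ∈ (LinearPMap.mkSpanSingleton (K := ℝ) (σ := RingHom.id ℝ) h s hh).domain :=
        Submodule.mem_span_singleton_self h
      have h2 := hg1 ⟨h, hdom⟩
      rw [LinearPMap.mkSpanSingleton_apply] at h2
      exact h2
  obtain ⟨g, hgle, hgh⟩ := main
  set p : EuclideanSpace ℝ (Fin n) :=
    (InnerProductSpace.toDual ℝ (EuclideanSpace ℝ (Fin n))).symm
      (LinearMap.toContinuousLinearMap g) with hp
  have hpk : ∀ k, ⟪p, k⟫ = g k := by
    intro k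
    rw [hp, InnerProductSpace.toDual_symm_apply]
    rfl
  refine ⟨p, fun k hk => ?_, by rw [hpk h]; exact hgh⟩
  have h1 : g k ≤ N k := hgle k
  have h2 : N k ≤ (W (y + (1:ℝ) • k) - W y)/1 := hNle k 1 one_pos (by simpa using hk)
  rw [one_smul, div_one] at h2
  rw [hpk k]
  linarith

/-- The `λ`-subdifferential of `u` at `x` relative to `Ω`. -/
def lsubdiff {n : ℕ} (lam : ℝ) (Ω : Set (EuclideanSpace ℝ (Fin n)))
    (u : EuclideanSpace ℝ (Fin n) → ℝ) (x : EuclideanSpace ℝ (Fin n)) :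
    Set (EuclideanSpace ℝ (Fin n)) :=
  {p | ∀ h : EuclideanSpace ℝ (Fin n), segment ℝ x (x + h) ⊆ Ω →
    u x + ⟪p, h⟫ - lam * ‖h‖ ^ 2 ≤ u (x + h)}

set_option maxHeartbeats 1000000 in
theorem lambda_mean_value {n : ℕ} (Ω : Set (EuclideanSpace ℝ (Fin n))) (hΩ : IsOpen Ω)
    (U : EuclideanSpace ℝ (Fin n) → ℝ) (hU : ConvexOn ℝ Ω U) (hc : ContinuousOn U Ω)
    (c : ℝ) (b : EuclideanSpace ℝ (Fin n))
    (B : EuclideanSpace ℝ (Fin n) →L[ℝ] EuclideanSpace ℝ (Fin n))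
    (P : EuclideanSpace ℝ (Fin n) → ℝ) (hP : ∀ y, P y = c + ⟪b, y⟫ + ⟪B y, y⟫)
    (lam : ℝ)
    (hlam : IsGreatest ((fun w : EuclideanSpace ℝ (Fin n) => |⟪B w, w⟫|) '' sphere 0 1) lam)
    (u : EuclideanSpace ℝ (Fin n) → ℝ) (hu : ∀ y, u y = U y + P y)
    (x : EuclideanSpace ℝ (Fin n)) (hx : x ∈ Ω)
    (h : EuclideanSpace ℝ (Fin n)) (hseg : segment ℝ x (x + h) ⊆ Ω) :
    ∃ t ∈ Set.Icc (0 : ℝ) 1, ∃ p ∈ lsubdiff lam Ω u (x + t • h),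
      u (x + h) - u x = ⟪p, h⟫ := by
  classical
  -- lam is nonnegative
  obtain ⟨w₀, hw₀, hw₀e⟩ := hlam.1
  have hlam0 : 0 ≤ lam := hw₀e ▸ abs_nonneg _
  -- the quadratic bound
  have hquad : ∀ z : EuclideanSpace ℝ (Fin n), |⟪B z, z⟫| ≤ lam * ‖z‖^2 := by
    intro z
    by_cases hz : z = 0
    · subst hz
      simp only [inner_zero_right, abs_zero, norm_zero]
      positivity
    · have hnz : ‖z‖ ≠ 0 := norm_ne_zero_iff.mpr hz
      set w : EuclideanSpace ℝ (Fin n) := ‖z‖⁻¹ • z with hw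
      have hwmem : w ∈ sphere (0 : EuclideanSpace ℝ (Fin n)) 1 := by
        rw [mem_sphere_zero_iff_norm, hw, norm_smul, Real.norm_eq_abs, abs_inv, abs_norm,
          inv_mul_cancel₀ hnz]
      have hb := hlam.2 (Set.mem_image_of_mem _ hwmem)
      have hBw : ⟪B w, w⟫ = ‖z‖⁻¹ * (‖z‖⁻¹ * ⟪B z, z⟫) := by
        rw [hw, ContinuousLinearMap.map_smul, real_inner_smul_left, real_inner_smul_right]
      rw [hBw] at hb
      rw [abs_mul, abs_mul, abs_inv, abs_norm] at hb
      have h2 := mul_le_mul_of_nonneg_left hb (by positivity : (0:ℝ) ≤ ‖z‖^2)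
      calc |⟪B z, z⟫| = ‖z‖^2 * (‖z‖⁻¹ * (‖z‖⁻¹ * |⟪B z, z⟫|)) := by
            field_simp
        _ ≤ ‖z‖^2 * lam := h2
        _ = lam * ‖z‖^2 := by ring
  -- the one-dimensional domain
  set I : Set ℝ := {τ : ℝ | x + τ • h ∈ Ω} with hI
  have hIo : IsOpen I := by
    have : I = (fun τ : ℝ => x + τ • h) ⁻¹' Ω := rfl
    rw [this]
    exact hΩ.preimage (by continuity)
  have hIc : Convex ℝ I := by
    intro τ₁ h1 τ₂ h2 a b' ha hb' hab
    have hpt : x + (a*τ₁ + b'*τ₂) • h = a • (x + τ₁ • h) + b' • (x + τ₂ • h) := by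
      match_scalars <;> simp <;> linarith
    show x + (a*τ₁ + b'*τ₂) • h ∈ Ω
    rw [hpt]
    exact hU.1 h1 h2 ha hb' hab
  have h01I : Set.Icc (0:ℝ) 1 ⊆ I := by
    intro τ hτ
    show x + τ • h ∈ Ω
    apply hseg
    rw [segment_eq_image']
    exact ⟨τ, hτ, by rw [add_sub_cancel_left]⟩
  -- the 1D function
  set mU : ℝ := U (x + h) - U x with hmU
  set f : ℝ → ℝ := fun τ => U (x + τ • h) - U x - τ * mU with hf
  have hfconv : ConvexOn ℝ I f := by
    refine ⟨hIc, fun τ₁ h1 τ₂ h2 a b' ha hb' hab => ?_⟩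
    have hpt : x + (a*τ₁ + b'*τ₂) • h = a • (x + τ₁ • h) + b' • (x + τ₂ • h) := by
      match_scalars <;> simp <;> linarith
    have hcv := hU.2 h1 h2 ha hb' hab
    rw [smul_eq_mul, smul_eq_mul] at hcv
    simp only [smul_eq_mul, hf]
    rw [hpt]
    have e1 : a * (U x) + b' * (U x) = U x := by rw [← add_mul, hab, one_mul]
    nlinarith [hcv, e1]
  have hfcont : ContinuousOn f I := by
    have h1 : ContinuousOn (fun τ : ℝ => U (x + τ • h)) I := by
      apply hc.comp (Continuous.continuousOn (by continuity))
      intro τ hτ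
      exact hτ
    exact (h1.sub continuousOn_const).sub (Continuous.continuousOn (by continuity))
  have hf01 : f 0 = f 1 := by
    simp only [hf, zero_smul, add_zero, one_smul, zero_mul, one_mul, hmU]
    ring
  -- apply the 1D lemma with β = ⟪B h, h⟫
  obtain ⟨t, ht01, hkey⟩ := oneD hIo hIc h01I hfconv hfcont hf01 ⟪B h, h⟫
  set β : ℝ := ⟪B h, h⟫ with hβ
  set y : EuclideanSpace ℝ (Fin n) := x + t • h with hy
  have hyΩ : y ∈ Ω := h01I ht01
  set s : ℝ := mU + β * (1 - 2*t) with hs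
  -- conditions A and B
  have hA : ∀ ε : ℝ, 0 < ε → y + ε • h ∈ Ω → U y + ε * s ≤ U (y + ε • h) := by
    intro ε hε hm
    have hpt : y + ε • h = x + (t + ε) • h := by rw [hy]; module
    rw [hpt] at hm ⊢
    have htεI : (t + ε) ∈ I := hm
    have := hkey (t + ε) htεI
    simp only [hf] at this
    rw [hy, hs]
    nlinarith [this]
  have hB : ∀ ε : ℝ, 0 < ε → y + ε • (-h) ∈ Ω → U y - ε * s ≤ U (y + ε • (-h)) := by
    intro ε hε hm
    have hpt : y + ε • (-h) = x + (t - ε) • h := by rw [hy]; module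
    rw [hpt] at hm ⊢
    have htεI : (t - ε) ∈ I := hm
    have := hkey (t - ε) htεI
    simp only [hf] at this
    rw [hy, hs]
    nlinarith [this]
  obtain ⟨p₀, hp₀sub, hp₀h⟩ := exists_subgrad hΩ hU hyΩ h s hA hB
  -- assemble p
  set p : EuclideanSpace ℝ (Fin n) := p₀ + b + B y + (ContinuousLinearMap.adjoint B) y with hp
  have hPexp : ∀ z k : EuclideanSpace ℝ (Fin n),
      P (z + k) = P z + ⟪b, k⟫ + ⟪B z, k⟫ + ⟪B k, z⟫ + ⟪B k, k⟫ := by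
    intro z k
    simp only [hP, map_add, inner_add_left, inner_add_right]
    ring
  have hpk : ∀ k : EuclideanSpace ℝ (Fin n),
      ⟪p, k⟫ = ⟪p₀, k⟫ + ⟪b, k⟫ + ⟪B y, k⟫ + ⟪B k, y⟫ := by
    intro k
    rw [hp]
    simp only [inner_add_left]
    rw [ContinuousLinearMap.adjoint_inner_left, real_inner_comm y (B k)]
  refine ⟨t, ht01, p, ?_, ?_⟩
  · -- p ∈ lsubdiff
    intro k hks
    have hyk : y + k ∈ Ω := hks (right_mem_segment ℝ _ _)
    have h₁ := hp₀sub k hyk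
    have h₂ : -(lam * ‖k‖^2) ≤ ⟪B k, k⟫ := (abs_le.mp (hquad k)).1
    rw [hu (y + k), hu y, hPexp y k, hpk k]
    linarith
  · -- the value identity
    rw [hu (x + h), hu x, hPexp x h, hpk h, hp₀h]
    have e1 : ⟪B y, h⟫ = ⟪B x, h⟫ + t * β := by
      rw [hy, map_add, ContinuousLinearMap.map_smul, inner_add_left, real_inner_smul_left, hβ]
    have e2 : ⟪B h, y⟫ = ⟪B h, x⟫ + t * β := by
      rw [hy, inner_add_right, real_inner_smul_right, hβ]
    rw [e1, e2, hs, hmU]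
    ring
end

section
/- Let u = U + V on an open set Ω ⊆ ℝⁿ, where U is convex and V ∈ C¹(Ω). Then for every λ ≥ 0 and every x ∈ Ω, ∂^λ u(x) ⊆ ∂U(x) + {∇V(x)}. -/
open RealInnerProductSpace Filter Metric MeasureTheory Topology

theorem lsubdiff_subset_subdiff_add_grad {n : ℕ}
    (Ω : Set (EuclideanSpace ℝ (Fin n))) (hΩ : IsOpen Ω)
    (U : EuclideanSpace ℝ (Fin n) → ℝ) (hU : ConvexOn ℝ Ω U) (hc : ContinuousOn U Ω)
    (V : EuclideanSpace ℝ (Fin n) → ℝ)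
    (gV : EuclideanSpace ℝ (Fin n) → EuclideanSpace ℝ (Fin n))
    (hgV : ∀ y ∈ Ω, HasGradientAt V (gV y) y) (hgVc : ContinuousOn gV Ω)
    (u : EuclideanSpace ℝ (Fin n) → ℝ) (hu : ∀ y, u y = U y + V y)
    (lam : ℝ) (hlam : 0 ≤ lam)
    (x : EuclideanSpace ℝ (Fin n)) (hx : x ∈ Ω) :
    ∀ p ∈ lsubdiff lam Ω u x, p - gV x ∈ subdiff Ω U x := by
  intro p hp h hseg
  have hx' : x ∈ Ω := hx
  have hxh : x + h ∈ Ω := hseg (right_mem_segment ℝ x (x + h))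
  -- the directional derivative of V at x in direction h
  have hderiv : HasDerivAt (fun t : ℝ => V (x + t • h)) ⟪gV x, h⟫ 0 := by
    have hline : HasDerivAt (fun t : ℝ => x + t • h) h 0 := by
      simpa using ((hasDerivAt_id (0 : ℝ)).smul_const h).const_add x
    have hf : HasFDerivAt V (InnerProductSpace.toDual ℝ _ (gV x)) x :=
      hasGradientAt_iff_hasFDerivAt.mp (hgV x hx)
    have hf0 : HasFDerivAt V (InnerProductSpace.toDual ℝ _ (gV x)) (x + (0:ℝ) • h) := by
      simpa using hf
    have := hf0.comp_hasDerivAt (0 : ℝ) hline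
    simpa [Function.comp_def] using this
  have hslope : Tendsto (fun t : ℝ => (V (x + t • h) - V x) / t) (𝓝[>] (0 : ℝ))
      (𝓝 ⟪gV x, h⟫) := by
    have := hasDerivAt_iff_tendsto_slope.mp hderiv
    have := this.mono_left (nhdsWithin_mono _ (by intro t ht; exact ne_of_gt ht))
    refine this.congr' ?_
    filter_upwards [self_mem_nhdsWithin] with t ht
    simp [slope_def_field, sub_zero, div_eq_inv_mul]
  -- the key inequality for small positive t
  have hkey : ∀ᶠ t : ℝ in 𝓝[>] (0 : ℝ),
      U x + ⟪p, h⟫ - (V (x + t • h) - V x) / t - lam * t * ‖h‖ ^ 2 ≤ U (x + h) := by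
    filter_upwards [Ioo_mem_nhdsGT_of_mem (by norm_num : (0:ℝ) ∈ Set.Ico 0 1)] with t ht
    obtain ⟨ht0, ht1⟩ := ht
    have hmem : x + t • h ∈ segment ℝ x (x + h) := by
      refine ⟨1 - t, t, by linarith, ht0.le, by ring, ?_⟩
      rw [smul_add, ← add_assoc, ← add_smul, sub_add_cancel, one_smul]
    have hseg' : segment ℝ x (x + t • h) ⊆ Ω :=
      (subset_trans ((convex_segment x (x + h)).segment_subset
        (left_mem_segment ℝ x (x + h)) hmem) hseg)
    have h1 := hp (t • h) hseg'
    rw [hu, hu] at h1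
    have h2 : U (x + t • h) ≤ (1 - t) * U x + t * U (x + h) := by
      have := hU.2 hx' hxh (by linarith : (0:ℝ) ≤ 1 - t) ht0.le (by ring)
      calc U (x + t • h) = U ((1 - t) • x + t • (x + h)) := by
            rw [smul_add, ← add_assoc, ← add_smul, sub_add_cancel, one_smul]
        _ ≤ (1 - t) * U x + t * U (x + h) := by simpa using this
    have hip : ⟪p, t • h⟫ = t * ⟪p, h⟫ := real_inner_smul_right p h t
    have hns : ‖t • h‖ ^ 2 = t ^ 2 * ‖h‖ ^ 2 := by
      rw [norm_smul, mul_pow, Real.norm_eq_abs, sq_abs]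
    rw [hip, hns] at h1
    rw [sub_le_iff_le_add, sub_le_iff_le_add, ← mul_le_mul_iff_right₀ ht0, mul_add, mul_add,
      mul_add, mul_div_cancel₀ _ ht0.ne']
    nlinarith [h1, h2]
  have hlim : Tendsto (fun t : ℝ => U x + ⟪p, h⟫ - (V (x + t • h) - V x) / t
      - lam * t * ‖h‖ ^ 2) (𝓝[>] (0 : ℝ)) (𝓝 (U x + ⟪p, h⟫ - ⟪gV x, h⟫ - lam * 0 * ‖h‖ ^ 2)) := by
    exact (tendsto_const_nhds.sub hslope).sub
      ((tendsto_const_nhds.mul (tendsto_id.mono_left nhdsWithin_le_nhds)).mul tendsto_const_nhds)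
  have : U x + ⟪p, h⟫ - ⟪gV x, h⟫ - lam * 0 * ‖h‖ ^ 2 ≤ U (x + h) :=
    le_of_tendsto hlim hkey
  have hinner : ⟪p - gV x, h⟫ = ⟪p, h⟫ - ⟪gV x, h⟫ := inner_sub_left p (gV x) h
  rw [hinner]
  linarith
end

section
/- Extended differentiability from subdifferential expansion: let u : Ω → ℝ be convex on an open set Ω ⊆ ℝⁿ, x ∈ Ω. Suppose there exist a linear map A : ℝⁿ → ℝⁿ and v ∈ ℝⁿ such that ∂u(x+w) ⊆ {v + A w} + o(‖w‖)·𝔹 as w → 0. Then u is differentiable at x with ∇u(x) = v, and the gradient map is differentiable at x in the extended sense: ess sup_{‖w‖≤δ} ‖∇u(x+w) − ∇u(x) − Aw‖/‖w‖ → 0 as δ → 0⁺. -/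
open RealInnerProductSpace Filter Metric MeasureTheory Topology

theorem grad_mem_subdiff {n : ℕ} (Ω : Set (EuclideanSpace ℝ (Fin n)))
    (u : EuclideanSpace ℝ (Fin n) → ℝ) (hu : ConvexOn ℝ Ω u)
    (z g : EuclideanSpace ℝ (Fin n)) (hg : HasGradientAt u g z) :
    g ∈ subdiff Ω u z := by
  intro h hseg
  have hzΩ : z ∈ Ω := hseg (left_mem_segment ℝ z (z + h))
  have hzhΩ : z + h ∈ Ω := hseg (right_mem_segment ℝ z (z + h))
  have hline : HasDerivAt (fun t : ℝ => z + t • h) h 0 := by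
    simpa using ((hasDerivAt_id (0:ℝ)).smul_const h).const_add z
  have hφ : HasDerivAt (fun t : ℝ => u (z + t • h)) ⟪g, h⟫ 0 := by
    have h1 : HasFDerivAt u (InnerProductSpace.toDual ℝ _ g) (z + (0:ℝ) • h) := by
      simpa using hg.hasFDerivAt
    simpa [InnerProductSpace.toDual_apply_apply, Function.comp_def] using h1.comp_hasDerivAt 0 hline
  have slope_le : ∀ t : ℝ, t ∈ Set.Ioc (0:ℝ) 1 →
      (u (z + t • h) - u z) / t ≤ u (z + h) - u z := by
    intro t ht
    have hcomb : (1 - t) • z + t • (z + h) = z + t • h := by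
      rw [sub_smul, one_smul, smul_add]; abel
    have h2 := hu.2 hzΩ hzhΩ (show (0:ℝ) ≤ 1 - t by linarith [ht.2]) (show (0:ℝ) ≤ t from ht.1.le) (by ring)
    rw [hcomb, smul_eq_mul, smul_eq_mul] at h2
    rw [div_le_iff₀ ht.1]
    nlinarith [h2]
  have htend : Tendsto (slope (fun t : ℝ => u (z + t • h)) 0) (𝓝[>] (0:ℝ)) (𝓝 ⟪g, h⟫) :=
    (hasDerivAt_iff_tendsto_slope.1 hφ).mono_left
      (nhdsWithin_mono 0 (fun t ht => (ht : (0:ℝ) < t).ne'))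
  have hev : ∀ᶠ t in 𝓝[>] (0:ℝ),
      slope (fun t : ℝ => u (z + t • h)) 0 t ≤ u (z + h) - u z := by
    filter_upwards [Ioc_mem_nhdsGT_of_mem ⟨le_refl (0:ℝ), one_pos⟩] with t ht
    have := slope_le t ht
    rw [slope_def_field]
    simpa using this
  have := le_of_tendsto htend hev
  linarith

set_option maxHeartbeats 1000000 in
theorem extended_differentiability_of_subdiff_expansion {n : ℕ}
    (Ω : Set (EuclideanSpace ℝ (Fin n))) (hΩ : IsOpen Ω)
    (u : EuclideanSpace ℝ (Fin n) → ℝ) (hu : ConvexOn ℝ Ω u) (hc : ContinuousOn u Ω)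
    (x : EuclideanSpace ℝ (Fin n)) (hx : x ∈ Ω)
    (v : EuclideanSpace ℝ (Fin n))
    (A : EuclideanSpace ℝ (Fin n) →L[ℝ] EuclideanSpace ℝ (Fin n))
    (hyp : ∀ ε > (0 : ℝ), ∃ δ > (0 : ℝ), ∀ w : EuclideanSpace ℝ (Fin n), ‖w‖ ≤ δ →
      x + w ∈ Ω → ∀ p ∈ subdiff Ω u (x + w), ‖p - (v + A w)‖ ≤ ε * ‖w‖) :
    HasGradientAt u v x ∧
      ∀ ε > (0 : ℝ), ∃ δ > (0 : ℝ), ∀ᵐ w : EuclideanSpace ℝ (Fin n), ‖w‖ ≤ δ →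
        x + w ∈ Ω → ∀ g : EuclideanSpace ℝ (Fin n), HasGradientAt u g (x + w) →
          ‖g - v - A w‖ ≤ ε * ‖w‖ := by
  -- a ball around x inside Ω on which u is Lipschitz
  obtain ⟨R, hRpos, hRball⟩ : ∃ R > 0, ball x R ⊆ Ω := Metric.isOpen_iff.1 hΩ x hx
  have hcb : closedBall x (R / 2) ⊆ Ω :=
    (closedBall_subset_ball (by linarith)).trans hRball
  have hbd : Bornology.IsBounded (u '' ball x (R / 2)) := by
    apply Bornology.IsBounded.subset _ (Set.image_mono (f := u) ball_subset_closedBall)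
    exact ((isCompact_closedBall x (R / 2)).image_of_continuousOn (hc.mono hcb)).isBounded
  obtain ⟨K, hK⟩ :=
    (hu.subset ((ball_subset_closedBall).trans hcb)
      (convex_ball x (R / 2))).exists_lipschitzOnWith_of_isBounded
      (show R / 4 < R / 2 by linarith) hbd
  set r := R / 4 with hrdef
  have hrpos : 0 < r := by positivity
  have hballΩ : ball x r ⊆ Ω := (ball_subset_ball (by linarith)).trans hRball
  -- Rademacher: a.e. differentiability on the ball
  have hae : ∀ᵐ y ∂(volume : Measure (EuclideanSpace ℝ (Fin n))),
      y ∈ ball x r → DifferentiableAt ℝ u y := by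
    filter_upwards [hK.ae_differentiableWithinAt_of_mem] with y hy hymem
    exact (hy hymem).differentiableAt (isOpen_ball.mem_nhds hymem)
  -- density of differentiability points
  have hdense : ∀ y ∈ ball x r, ∀ ρ > (0:ℝ),
      ∃ z ∈ ball x r, dist z y < ρ ∧ DifferentiableAt ℝ u z := by
    intro y hy ρ hρ
    by_contra hcon
    push_neg at hcon
    have hsub : ball y ρ ∩ ball x r ⊆
        {w | ¬ (w ∈ ball x r → DifferentiableAt ℝ u w)} := by
      rintro z ⟨hz1, hz2⟩
      intro himp
      exact hcon z hz2 (mem_ball.1 hz1) (himp hz2)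
    have h0 : volume (ball y ρ ∩ ball x r) = 0 :=
      measure_mono_null hsub (ae_iff.1 hae)
    have hpos : 0 < volume (ball y ρ ∩ ball x r) :=
      (isOpen_ball.inter isOpen_ball).measure_pos volume ⟨y, mem_ball_self hρ, hy⟩
    exact hpos.ne' h0
  have hgs : ∀ z : EuclideanSpace ℝ (Fin n), DifferentiableAt ℝ u z →
      gradient u z ∈ subdiff Ω u z := fun z hz =>
    grad_mem_subdiff Ω u hu z _ hz.hasGradientAt
  -- lower bound
  have lower : ∀ w : EuclideanSpace ℝ (Fin n), ‖w‖ < r → u x + ⟪v, w⟫ ≤ u (x + w) := by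
    intro w hw
    have hxw : x + w ∈ ball x r := by
      rw [mem_ball, dist_eq_norm]; simpa using hw
    obtain ⟨δ₁, hδ₁pos, hδ₁⟩ := hyp 1 one_pos
    have hcux : ContinuousAt u x := hc.continuousAt (hΩ.mem_nhds hx)
    have key : ∀ ε' > (0:ℝ), ⟪v, w⟫ ≤ (u (x + w) - u x) + ε' := by
      intro ε' hε'
      have h1A : (0:ℝ) < 1 + ‖A‖ := by positivity
      obtain ⟨ρc, hρcpos, hρc⟩ := Metric.continuousAt_iff.1 hcux (ε' / 2) (by linarith)
      set M := ‖v‖ + (1 + ‖A‖) * r with hMdef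
      have hMpos : 0 < M := by nlinarith [norm_nonneg v, h1A, hrpos]
      set ρ := min (min δ₁ r) (min ρc (ε' / (2 * ((1 + ‖A‖) * (‖w‖ + 1) + M)))) with hρdef
      have hρpos : 0 < ρ := by
        apply lt_min (lt_min hδ₁pos hrpos) (lt_min hρcpos _)
        positivity
      have hρr : ρ ≤ r := (min_le_left _ _).trans (min_le_right _ _)
      have hρδ₁ : ρ ≤ δ₁ := (min_le_left _ _).trans (min_le_left _ _)
      have hρρc : ρ ≤ ρc := (min_le_right _ _).trans (min_le_left _ _)
      have hρle : ρ ≤ ε' / (2 * ((1 + ‖A‖) * (‖w‖ + 1) + M)) :=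
        (min_le_right _ _).trans (min_le_right _ _)
      clear_value ρ M
      obtain ⟨z, hzball, hzdist, hzdiff⟩ := hdense x (mem_ball_self hrpos) ρ hρpos
      obtain ⟨g, hgdef⟩ : ∃ g, g = gradient u z := ⟨_, rfl⟩
      have hzsub := hgs z hzdiff
      rw [← hgdef] at hzsub
      have hwz : ‖z - x‖ < ρ := by rwa [← dist_eq_norm]
      have hzx : x + (z - x) = z := by abel
      have hbound : ‖g - (v + A (z - x))‖ ≤ 1 * ‖z - x‖ := by
        apply hδ₁ (z - x) (hwz.le.trans hρδ₁)
        · rw [hzx]; exact hballΩ hzball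
        · rw [hzx]; exact hzsub
      have hgv : ‖g - v‖ ≤ (1 + ‖A‖) * ρ := by
        have hd : g - v = (g - (v + A (z - x))) + A (z - x) := by abel
        calc ‖g - v‖ ≤ ‖g - (v + A (z - x))‖ + ‖A (z - x)‖ := by
              rw [hd]; exact norm_add_le _ _
          _ ≤ 1 * ‖z - x‖ + ‖A‖ * ‖z - x‖ := add_le_add hbound (A.le_opNorm _)
          _ ≤ (1 + ‖A‖) * ρ := by nlinarith [hwz.le, norm_nonneg (z - x), norm_nonneg A]
      have hgn : ‖g‖ ≤ M := by
        have h0 : ‖g‖ ≤ ‖g - v‖ + ‖v‖ := by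
          calc ‖g‖ = ‖(g - v) + v‖ := by rw [sub_add_cancel]
            _ ≤ ‖g - v‖ + ‖v‖ := norm_add_le _ _
        nlinarith [h1A]
      -- subgradient inequality at z, towards x + w
      have hseg1 : segment ℝ z (z + ((x + w) - z)) ⊆ Ω := by
        rw [show z + ((x + w) - z) = x + w by abel]
        exact ((convex_ball x r).segment_subset hzball hxw).trans hballΩ
      have h1 := hzsub ((x + w) - z) hseg1
      rw [show z + ((x + w) - z) = x + w by abel] at h1
      -- continuity of u at x
      have hu_z : |u z - u x| < ε' / 2 := by
        have hzρc : dist z x < ρc := lt_of_lt_of_le hzdist hρρc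
        have := hρc hzρc
        rwa [Real.dist_eq] at this
      -- decompose the inner product
      have hdec : ⟪g, (x + w) - z⟫ = ⟪v, w⟫ + ⟪g - v, w⟫ + ⟪g, x - z⟫ := by
        rw [show (x + w) - z = w + (x - z) by abel, inner_add_right, inner_sub_left]
        ring
      have e1 : |⟪g - v, w⟫| ≤ ((1 + ‖A‖) * ρ) * ‖w‖ :=
        (abs_real_inner_le_norm _ _).trans
          (mul_le_mul_of_nonneg_right hgv (norm_nonneg w))
      have e2 : |⟪g, x - z⟫| ≤ M * ρ := by
        refine (abs_real_inner_le_norm _ _).trans ?_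
        rw [norm_sub_rev]
        exact mul_le_mul hgn hwz.le (norm_nonneg _) hMpos.le
      have hρC : ρ * ((1 + ‖A‖) * (‖w‖ + 1) + M) ≤ ε' / 2 := by
        rw [le_div_iff₀ (by positivity)] at hρle
        linarith
      have herr : ((1 + ‖A‖) * ρ) * ‖w‖ + M * ρ ≤ ε' / 2 := by
        nlinarith [norm_nonneg w, hρpos.le, h1A.le, hMpos.le]
      have hz1 := (abs_lt.1 hu_z).1
      have he1 := (abs_le.1 e1).1
      have he2 := (abs_le.1 e2).1
      linarith
    have := le_of_forall_pos_le_add key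
    linarith
  -- upper bound
  have upper : ∀ ε > (0:ℝ), ∃ δ > (0:ℝ), ∀ w : EuclideanSpace ℝ (Fin n), ‖w‖ < δ →
      u (x + w) ≤ u x + ⟪v, w⟫ + (ε + ‖A‖) * ‖w‖ ^ 2 := by
    intro ε hε
    obtain ⟨δ₀, hδ₀pos, hδ₀⟩ := hyp ε hε
    refine ⟨min δ₀ r, lt_min hδ₀pos hrpos, ?_⟩
    intro w hw
    have hwr : ‖w‖ < r := lt_of_lt_of_le hw (min_le_right _ _)
    have hxw : x + w ∈ ball x r := by
      rw [mem_ball, dist_eq_norm]; simpa using hwr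
    have hxwΩ : x + w ∈ Ω := hballΩ hxw
    -- the bound at differentiability points
    have hdiffpt : ∀ z ∈ ball x r, dist z x < min δ₀ r → DifferentiableAt ℝ u z →
        u z ≤ u x + ⟪v, z - x⟫ + (ε + ‖A‖) * ‖z - x‖ ^ 2 := by
      intro z hzball hzd hzdiff
      obtain ⟨g, hgdef⟩ : ∃ g, g = gradient u z := ⟨_, rfl⟩
      have hzsub := hgs z hzdiff
      rw [← hgdef] at hzsub
      have hzx : x + (z - x) = z := by abel
      have hbound : ‖g - (v + A (z - x))‖ ≤ ε * ‖z - x‖ := by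
        apply hδ₀ (z - x)
        · rw [← dist_eq_norm]; exact hzd.le.trans (min_le_left _ _)
        · rw [hzx]; exact hballΩ hzball
        · rw [hzx]; exact hzsub
      have hseg2 : segment ℝ z (z + (x - z)) ⊆ Ω := by
        rw [show z + (x - z) = x by abel]
        exact ((convex_ball x r).segment_subset hzball (mem_ball_self hrpos)).trans hballΩ
      have h2 := hzsub (x - z) hseg2
      rw [show z + (x - z) = x by abel] at h2
      have hdec : ⟪g, z - x⟫
          = ⟪v, z - x⟫ + ⟪A (z - x), z - x⟫ + ⟪g - (v + A (z - x)), z - x⟫ := by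
        rw [inner_sub_left, inner_add_left]; ring
      have e1 : ⟪A (z - x), z - x⟫ ≤ ‖A‖ * ‖z - x‖ ^ 2 := by
        calc ⟪A (z - x), z - x⟫ ≤ ‖A (z - x)‖ * ‖z - x‖ := real_inner_le_norm _ _
          _ ≤ (‖A‖ * ‖z - x‖) * ‖z - x‖ :=
              mul_le_mul_of_nonneg_right (A.le_opNorm _) (norm_nonneg _)
          _ = ‖A‖ * ‖z - x‖ ^ 2 := by ring
      have e2 : ⟪g - (v + A (z - x)), z - x⟫ ≤ ε * ‖z - x‖ ^ 2 := by
        calc ⟪g - (v + A (z - x)), z - x⟫ ≤ ‖g - (v + A (z - x))‖ * ‖z - x‖ :=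
              real_inner_le_norm _ _
          _ ≤ (ε * ‖z - x‖) * ‖z - x‖ := mul_le_mul_of_nonneg_right hbound (norm_nonneg _)
          _ = ε * ‖z - x‖ ^ 2 := by ring
      have hinner3 : ⟪g, x - z⟫ = - ⟪g, z - x⟫ := by
        rw [← inner_neg_right]; congr 1; abel
      linarith
    -- extend to all points by continuity and density
    have hcont : ContinuousAt (fun y : EuclideanSpace ℝ (Fin n) =>
        u y - (u x + ⟪v, y - x⟫ + (ε + ‖A‖) * ‖y - x‖ ^ 2)) (x + w) := by
      have h1 : ContinuousAt u (x + w) := hc.continuousAt (hΩ.mem_nhds hxwΩ)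
      have h2c : Continuous fun y : EuclideanSpace ℝ (Fin n) => ⟪v, y - x⟫ :=
        continuous_const.inner (continuous_id.sub continuous_const)
      have hnc : Continuous fun y : EuclideanSpace ℝ (Fin n) => (ε + ‖A‖) * ‖y - x‖ ^ 2 :=
        continuous_const.mul ((continuous_id.sub continuous_const).norm.pow 2)
      exact h1.sub ((continuous_const.add h2c).add hnc).continuousAt
    have key : ∀ ε' > (0:ℝ),
        u (x + w) ≤ (u x + ⟪v, (x + w) - x⟫ + (ε + ‖A‖) * ‖(x + w) - x‖ ^ 2) + ε' := by
      intro ε' hε'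
      obtain ⟨ρ₀, hρ₀pos, hρ₀⟩ := Metric.continuousAt_iff.1 hcont ε' hε'
      set ρ := min ρ₀ (min δ₀ r - ‖w‖) with hρdef
      have hρpos : 0 < ρ := lt_min hρ₀pos (by linarith [hw])
      have hρ₀' : ρ ≤ ρ₀ := min_le_left _ _
      have hρw : ρ ≤ min δ₀ r - ‖w‖ := min_le_right _ _
      clear_value ρ
      obtain ⟨z, hzball, hzdist, hzdiff⟩ := hdense (x + w) hxw ρ hρpos
      have hzd : dist z x < min δ₀ r := by
        calc dist z x ≤ dist z (x + w) + dist (x + w) x := dist_triangle _ _ _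
          _ < ρ + ‖w‖ := by
              have : dist (x + w) x = ‖w‖ := by rw [dist_eq_norm]; simp
              rw [this]; exact add_lt_add_left hzdist _
          _ ≤ min δ₀ r := by linarith
      have hFz := hdiffpt z hzball hzd hzdiff
      have hdist := hρ₀ (lt_of_lt_of_le hzdist hρ₀')
      rw [Real.dist_eq] at hdist
      have := abs_lt.1 hdist
      linarith [this.1, this.2, hFz]
    have h0 := le_of_forall_pos_le_add key
    have hsimp : (x + w) - x = w := by abel
    rw [hsimp] at h0
    linarith
  -- assemble the gradient statement
  have hgrad : HasGradientAt u v x := by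
    rw [hasGradientAt_iff_hasFDerivAt, hasFDerivAt_iff_isLittleO_nhds_zero,
      Asymptotics.isLittleO_iff]
    intro c hc0
    obtain ⟨δ₂, hδ₂pos, hup⟩ := upper 1 one_pos
    have hC : (0:ℝ) < 1 + ‖A‖ := by positivity
    have hmin : (0:ℝ) < min (min δ₂ r) (c / (1 + ‖A‖)) := by
      apply lt_min (lt_min hδ₂pos hrpos); positivity
    filter_upwards [Metric.ball_mem_nhds (0 : EuclideanSpace ℝ (Fin n)) hmin] with w hw
    rw [mem_ball, dist_zero_right] at hw
    have hw2 : ‖w‖ < δ₂ := lt_of_lt_of_le hw ((min_le_left _ _).trans (min_le_left _ _))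
    have hwr : ‖w‖ < r := lt_of_lt_of_le hw ((min_le_left _ _).trans (min_le_right _ _))
    have hwc : ‖w‖ < c / (1 + ‖A‖) := lt_of_lt_of_le hw (min_le_right _ _)
    have h1 := hup w hw2
    have h2 := lower w hwr
    have hwc' : (1 + ‖A‖) * ‖w‖ ≤ c := by
      have := (lt_div_iff₀ hC).1 hwc
      linarith
    simp only [InnerProductSpace.toDual_apply_apply]
    rw [Real.norm_eq_abs]
    have hb : |u (x + w) - u x - ⟪v, w⟫| ≤ (1 + ‖A‖) * ‖w‖ ^ 2 := by
      rw [abs_le]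
      constructor
      · nlinarith [sq_nonneg ‖w‖]
      · nlinarith
    calc |u (x + w) - u x - ⟪v, w⟫| ≤ (1 + ‖A‖) * ‖w‖ ^ 2 := hb
      _ = ((1 + ‖A‖) * ‖w‖) * ‖w‖ := by ring
      _ ≤ c * ‖w‖ := mul_le_mul_of_nonneg_right hwc' (norm_nonneg w)
  refine ⟨hgrad, ?_⟩
  intro ε hε
  obtain ⟨δ, hδpos, hδ⟩ := hyp ε hε
  refine ⟨δ, hδpos, Filter.Eventually.of_forall ?_⟩
  intro w hw hwΩ g hg
  have := hδ w hw hwΩ g (grad_mem_subdiff Ω u hu (x + w) g hg)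
  rwa [sub_sub]
end

section
/- Second order characterization (Rockafellar): let u : Ω → ℝ be convex on an open set Ω ⊆ ℝⁿ and x ∈ Ω. Then u has a second order expansion at x (there is a polynomial Pₓ of degree ≤ 2 with u(x+w) = Pₓ(w) + o(‖w‖²)) if and only if u is differentiable at x and its gradient is differentiable at x in the extended sense, i.e. there is a linear map A with ess sup_{‖w‖≤δ}‖∇u(x+w) − ∇u(x) − Aw‖/‖w‖ → 0 as δ → 0⁺. In this case Pₓ(w) = u(x) + ⟨∇u(x), w⟩ + ½⟨Aw, w⟩ and A (symmetrized) is positive semidefinite. -/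
open RealInnerProductSpace Filter Metric MeasureTheory Topology

variable {n : ℕ}




lemma grad_ineq {u : EuclideanSpace ℝ (Fin n) → ℝ} {s : Set (EuclideanSpace ℝ (Fin n))}
    (hu : ConvexOn ℝ s u) {y z g : EuclideanSpace ℝ (Fin n)}
    (hy : y ∈ s) (hz : z ∈ s) (hg : HasGradientAt u g y) :
    u y + ⟪g, z - y⟫ ≤ u z := by
  have h1 : HasDerivAt (fun t : ℝ => y + t • (z - y)) (z - y) 0 := by
    simpa using ((hasDerivAt_id (0:ℝ)).smul_const (z - y)).const_add y
  have hd : HasDerivAt (fun t : ℝ => u (y + t • (z - y))) ⟪g, z - y⟫ 0 := by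
    have h2 : HasFDerivAt u ((InnerProductSpace.toDual ℝ (EuclideanSpace ℝ (Fin n))) g)
        ((fun t : ℝ => y + t • (z - y)) 0) := by simpa using hg.hasFDerivAt
    have h3 := h2.comp_hasDerivAt (0:ℝ) h1
    simp only [InnerProductSpace.toDual_apply_apply] at h3
    exact h3
  have hslope : Tendsto (slope (fun t : ℝ => u (y + t • (z - y))) 0) (𝓝[>] (0:ℝ))
      (𝓝 ⟪g, z - y⟫) :=
    (hasDerivAt_iff_tendsto_slope.mp hd).mono_left
      (nhdsWithin_mono 0 (fun t ht => ne_of_gt ht))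
  have hev : ∀ᶠ t in 𝓝[>] (0:ℝ),
      slope (fun t : ℝ => u (y + t • (z - y))) 0 t ≤ u z - u y := by
    filter_upwards [Ioc_mem_nhdsGT_of_mem (Set.left_mem_Ico.mpr one_pos)] with t ht
    have ht0 : 0 < t := ht.1
    have ht1 : t ≤ 1 := ht.2
    have hconv := hu.2 hy hz (show (0:ℝ) ≤ 1 - t by linarith) ht0.le (by ring)
    have heq : (1 - t) • y + t • z = y + t • (z - y) := by
      simp [smul_sub, sub_smul]; abel
    rw [heq] at hconv
    simp only [smul_eq_mul] at hconv
    have hle : u (y + t • (z - y)) - u y ≤ t * (u z - u y) := by nlinarith [hconv]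
    simp only [slope_def_field, zero_smul, add_zero, sub_zero]
    rw [div_le_iff₀ ht0]
    simpa [mul_comm] using hle
  have := le_of_tendsto hslope hev
  linarith

lemma grad_unique {u : EuclideanSpace ℝ (Fin n) → ℝ} {g g' y : EuclideanSpace ℝ (Fin n)}
    (h : HasGradientAt u g y) (h' : HasGradientAt u g' y) : g = g' :=
  (InnerProductSpace.toDual ℝ (EuclideanSpace ℝ (Fin n))).injective
    (h.hasFDerivAt.unique h'.hasFDerivAt)

lemma chain_ineq {u : EuclideanSpace ℝ (Fin n) → ℝ} {s : Set (EuclideanSpace ℝ (Fin n))}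
    (hu : ConvexOn ℝ s u) (p g : ℕ → EuclideanSpace ℝ (Fin n)) (N : ℕ)
    (hp : ∀ i, i ≤ N → p i ∈ s)
    (hg : ∀ i, i < N → HasGradientAt u (g i) (p i)) :
    u (p 0) + ∑ i ∈ Finset.range N, ⟪g i, p (i+1) - p i⟫ ≤ u (p N) := by
  induction N with
  | zero => simp
  | succ N ih =>
    have h1 : u (p N) + ⟪g N, p (N+1) - p N⟫ ≤ u (p (N+1)) :=
      grad_ineq hu (hp N (by omega)) (hp (N+1) le_rfl) (hg N (by omega))
    have h2 := ih (fun i hi => hp i (by omega)) (fun i hi => hg i (by omega))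
    rw [Finset.sum_range_succ]
    linarith

lemma sum_range_cast (m : ℕ) : ∑ i ∈ Finset.range m, (i:ℝ) = m * (m-1) / 2 := by
  induction m with
  | zero => simp
  | succ m ih => rw [Finset.sum_range_succ, ih]; push_cast; ring



lemma ae_translate {p : EuclideanSpace ℝ (Fin n) → Prop} (x : EuclideanSpace ℝ (Fin n))
    (h : ∀ᵐ y : EuclideanSpace ℝ (Fin n), p y) :
    ∀ᵐ w : EuclideanSpace ℝ (Fin n), p (x + w) := by
  rw [ae_iff] at h ⊢
  have : {w : EuclideanSpace ℝ (Fin n) | ¬ p (x + w)}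
      = (fun w => x + w) ⁻¹' {y | ¬ p y} := rfl
  rw [this, measure_preimage_add]
  exact h

lemma ae_scale {p : EuclideanSpace ℝ (Fin n) → Prop} {c : ℝ} (hc : c ≠ 0)
    (h : ∀ᵐ y : EuclideanSpace ℝ (Fin n), p y) :
    ∀ᵐ w : EuclideanSpace ℝ (Fin n), p (c • w) := by
  rw [ae_iff] at h ⊢
  have : {w : EuclideanSpace ℝ (Fin n) | ¬ p (c • w)}
      = (fun w : EuclideanSpace ℝ (Fin n) => c • w) ⁻¹' {y | ¬ p y} := rfl
  rw [this, MeasureTheory.Measure.addHaar_preimage_smul _ hc, h, mul_zero]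

/-- local Lipschitz constant for a convex continuous function near a point. -/
lemma exists_lipschitz_ball {Ω : Set (EuclideanSpace ℝ (Fin n))} (hΩ : IsOpen Ω)
    {u : EuclideanSpace ℝ (Fin n) → ℝ} (hu : ConvexOn ℝ Ω u) (hc : ContinuousOn u Ω)
    {x : EuclideanSpace ℝ (Fin n)} (hx : x ∈ Ω) :
    ∃ r > (0:ℝ), ∃ K : NNReal, ball x r ⊆ Ω ∧ LipschitzOnWith K u (ball x r) := by
  obtain ⟨R, hR, hball⟩ := Metric.isOpen_iff.mp hΩ x hx
  have hcb : closedBall x (R/2) ⊆ Ω := by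
    intro y hy
    exact hball (lt_of_le_of_lt (mem_closedBall.mp hy) (by linarith))
  obtain ⟨M, hM⟩ := (isCompact_closedBall x (R/2)).exists_bound_of_continuousOn (hc.mono hcb)
  have hconv : ConvexOn ℝ (ball x (R/2)) u :=
    hu.subset (fun y hy => hcb (ball_subset_closedBall hy)) (convex_ball x (R/2))
  have hlip := hconv.lipschitzOnWith_of_abs_le (ε := R/4) (by linarith)
    (M := M) (fun a ha => by
      simpa [Real.norm_eq_abs] using hM a (ball_subset_closedBall ha))
  refine ⟨R/4, by linarith, (2 * M / (R / 4)).toNNReal, ?_, ?_⟩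
  · intro y hy
    exact hball (lt_of_lt_of_le (mem_ball.mp hy) (by linarith))
  · have : R/2 - R/4 = R/4 := by ring
    rwa [this] at hlip

lemma term_bound {g v w : EuclideanSpace ℝ (Fin n)}
    {A : EuclideanSpace ℝ (Fin n) →L[ℝ] EuclideanSpace ℝ (Fin n)} {ε c : ℝ}
    (hc : 0 ≤ c) (hb : ‖g - v - A (c • w)‖ ≤ ε * ‖c • w‖) :
    |⟪g, w⟫ - ⟪v, w⟫ - c * ⟪A w, w⟫| ≤ ε * c * ‖w‖^2 := by
  have heq : ⟪g, w⟫ - ⟪v, w⟫ - c * ⟪A w, w⟫ = ⟪g - v - A (c • w), w⟫ := by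
    rw [_root_.map_smul]
    simp [inner_sub_left, real_inner_smul_left]
  rw [heq]
  calc |⟪g - v - A (c • w), w⟫| ≤ ‖g - v - A (c • w)‖ * ‖w‖ := abs_real_inner_le_norm _ _
    _ ≤ (ε * ‖c • w‖) * ‖w‖ := by
        apply mul_le_mul_of_nonneg_right hb (norm_nonneg _)
    _ = ε * c * ‖w‖^2 := by
        rw [norm_smul, Real.norm_eq_abs, abs_of_nonneg hc]; ring

set_option maxHeartbeats 2000000 in
lemma converse_expansion {Ω : Set (EuclideanSpace ℝ (Fin n))} (hΩ : IsOpen Ω)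
    {u : EuclideanSpace ℝ (Fin n) → ℝ} (hu : ConvexOn ℝ Ω u) (hc : ContinuousOn u Ω)
    {x : EuclideanSpace ℝ (Fin n)} (hx : x ∈ Ω)
    {v : EuclideanSpace ℝ (Fin n)} {A : EuclideanSpace ℝ (Fin n) →L[ℝ] EuclideanSpace ℝ (Fin n)}
    (hv : HasGradientAt u v x)
    (hae : ∀ ε > (0:ℝ), ∃ δ > (0:ℝ), ∀ᵐ w : EuclideanSpace ℝ (Fin n), ‖w‖ ≤ δ → x + w ∈ Ω →
      ∀ g, HasGradientAt u g (x + w) → ‖g - v - A w‖ ≤ ε * ‖w‖) :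
    ∀ ε > (0:ℝ), ∃ δ > (0:ℝ), ∀ w : EuclideanSpace ℝ (Fin n), ‖w‖ ≤ δ → x + w ∈ Ω →
      |u (x + w) - (u x + ⟪v, w⟫ + (1/2) * ⟪A w, w⟫)| ≤ ε * ‖w‖^2 := by
  obtain ⟨r, hr, K, hrΩ, hlip⟩ := exists_lipschitz_ball hΩ hu hc hx
  obtain ⟨ut, hut_lip, hut_eq⟩ := hlip.extend_real
  have hconvb : ConvexOn ℝ (ball x r) u := hu.subset hrΩ (convex_ball x r)
  intro ε hε
  obtain ⟨δ₀, hδ₀, hQ⟩ := hae ε hε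
  have hdiff : ∀ᵐ w : EuclideanSpace ℝ (Fin n), DifferentiableAt ℝ ut (x + w) :=
    ae_translate x hut_lip.ae_differentiableAt
  set good : EuclideanSpace ℝ (Fin n) → Prop := fun w =>
    ((‖w‖ ≤ δ₀ → x + w ∈ Ω → ∀ g, HasGradientAt u g (x+w) → ‖g - v - A w‖ ≤ ε * ‖w‖)
      ∧ DifferentiableAt ℝ ut (x + w)) with hgood_def
  have hae_good : ∀ᵐ w : EuclideanSpace ℝ (Fin n), good w := hQ.and hdiff
  have hae_G : ∀ᵐ w : EuclideanSpace ℝ (Fin n),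
      ∀ N i : ℕ, good ((((i:ℝ)+1)/((N:ℝ)+1)) • w) := by
    rw [ae_all_iff]; intro N; rw [ae_all_iff]; intro i
    exact ae_scale (by positivity) hae_good
  have hdense : Dense {w : EuclideanSpace ℝ (Fin n) |
      ∀ N i : ℕ, good ((((i:ℝ)+1)/((N:ℝ)+1)) • w)} :=
    MeasureTheory.Measure.dense_of_ae hae_G
  set δ₁ := min δ₀ (r/2) with hδ₁def
  have hδ₁pos : 0 < δ₁ := lt_min hδ₀ (by linarith)
  -- key pointwise claim for good w
  have key : ∀ w : EuclideanSpace ℝ (Fin n),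
      (∀ N i : ℕ, good ((((i:ℝ)+1)/((N:ℝ)+1)) • w)) → ‖w‖ ≤ δ₁ →
      |u (x + w) - (u x + ⟪v, w⟫ + (1/2) * ⟪A w, w⟫)| ≤ ε * ‖w‖^2 := by
    intro w hwG hwle
    have hwδ₀ : ‖w‖ ≤ δ₀ := le_trans hwle (min_le_left _ _)
    have hwr : ‖w‖ ≤ r/2 := le_trans hwle (min_le_right _ _)
    have hball : ∀ c : ℝ, 0 ≤ c → c ≤ 1 → x + c • w ∈ ball x r := by
      intro c h0 h1
      rw [mem_ball_iff_norm, add_sub_cancel_left, norm_smul, Real.norm_eq_abs,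
        abs_of_nonneg h0]
      nlinarith [norm_nonneg w]
    -- gradients at all scaled points, bundled for all i with junk elsewhere
    have hGL : ∀ N : ℕ, ∀ i : ℕ, ∃ g : EuclideanSpace ℝ (Fin n), i ≤ N+1 →
        HasGradientAt u g (x + (((i:ℝ)/((N:ℝ)+1))) • w) ∧
        ‖g - v - A ((((i:ℝ)/((N:ℝ)+1))) • w)‖ ≤ ε * (((i:ℝ)/((N:ℝ)+1)) * ‖w‖) := by
      intro N i
      match i with
      | 0 =>
        refine ⟨v, fun _ => ⟨by simpa using hv, by simp⟩⟩
      | (j+1) =>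
        simp only [Nat.cast_add, Nat.cast_one]
        by_cases hj : j + 1 ≤ N + 1
        · have hc01 : 0 < ((j:ℝ)+1)/((N:ℝ)+1) ∧ ((j:ℝ)+1)/((N:ℝ)+1) ≤ 1 := by
            constructor
            · positivity
            · rw [div_le_one (by positivity)]
              exact_mod_cast hj
          set c : ℝ := ((j:ℝ)+1)/((N:ℝ)+1) with hc_def
          have hmem : x + c • w ∈ ball x r := hball c hc01.1.le hc01.2
          have hgd := hwG N j
          have heq : u =ᶠ[𝓝 (x + c • w)] ut :=
            eventually_of_mem (isOpen_ball.mem_nhds hmem) hut_eq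
          have hdu : DifferentiableAt ℝ u (x + c • w) :=
            heq.differentiableAt_iff.mpr hgd.2
          have hnc : ‖c • w‖ ≤ δ₀ := by
            rw [norm_smul, Real.norm_eq_abs, abs_of_nonneg hc01.1.le]
            nlinarith [norm_nonneg w, hc01.2, hc01.1, hwδ₀, (le_trans hwle (min_le_left _ _))]
          have hbd := hgd.1 hnc (hrΩ hmem) _ hdu.hasGradientAt
          refine ⟨gradient u (x + c • w), fun _ => ⟨hdu.hasGradientAt, ?_⟩⟩
          calc ‖gradient u (x + c • w) - v - A (c • w)‖ ≤ ε * ‖c • w‖ := hbd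
            _ = ε * (c * ‖w‖) := by
                rw [norm_smul, Real.norm_eq_abs, abs_of_nonneg hc01.1.le]
        · exact ⟨0, fun h => absurd h hj⟩
    -- per-N lower bound
    have lower : ∀ N : ℕ, u x + (⟪v,w⟫ + ((N:ℝ)/(2*((N:ℝ)+1))) * (⟪A w,w⟫ - ε*‖w‖^2))
        ≤ u (x+w) := by
      intro N
      set m : ℝ := (N:ℝ)+1 with hm_def
      have hm : (0:ℝ) < m := by positivity
      choose gl hgl using hGL N
      set p : ℕ → EuclideanSpace ℝ (Fin n) := fun i => x + ((i:ℝ)/m) • w with hp_def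
      have hp : ∀ i, i ≤ N+1 → p i ∈ ball x r := by
        intro i hi
        exact hball _ (by positivity) (by
          rw [div_le_one hm, hm_def]
          exact_mod_cast hi)
      have hchain := chain_ineq hconvb p gl (N+1) hp (fun i hi => (hgl i (by omega)).1)
      have hp0 : p 0 = x := by simp [hp_def]
      have hpN : p (N+1) = x + w := by
        have h1 : ((N+1:ℕ):ℝ)/m = 1 := by
          rw [hm_def]; push_cast; field_simp
        simp only [hp_def, h1, one_smul]
      rw [hp0, hpN] at hchain
      have hterm : ∀ i ∈ Finset.range (N+1),
          ⟪v,w⟫/m + (i:ℝ)*((⟪A w,w⟫ - ε*‖w‖^2)/m^2) ≤ ⟪gl i, p (i+1) - p i⟫ := by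
        intro i hi
        rw [Finset.mem_range] at hi
        have hΔ : p (i+1) - p i = ((1:ℝ)/m) • w := by
          simp only [hp_def, add_sub_add_left_eq_sub, ← sub_smul]
          congr 1
          push_cast
          field_simp
          ring
        rw [hΔ, real_inner_smul_right]
        have hc0 : (0:ℝ) ≤ (i:ℝ)/m := by positivity
        have hb' : ‖gl i - v - A (((i:ℝ)/m) • w)‖ ≤ ε * ‖((i:ℝ)/m) • w‖ := by
          rw [norm_smul, Real.norm_eq_abs, abs_of_nonneg hc0, ← mul_assoc, mul_assoc]
          exact (hgl i (by omega)).2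
        have htb := term_bound hc0 hb'
        have h1 := (abs_le.mp htb).1
        have h2 : ⟪v,w⟫ + ((i:ℝ)/m)*⟪A w,w⟫ - ε*((i:ℝ)/m)*‖w‖^2 ≤ ⟪gl i, w⟫ := by
          linarith
        have hkey : ⟪v,w⟫/m + (i:ℝ)*((⟪A w,w⟫ - ε*‖w‖^2)/m^2)
            = (1/m)*(⟪v,w⟫ + ((i:ℝ)/m)*⟪A w,w⟫ - ε*((i:ℝ)/m)*‖w‖^2) := by
          field_simp
          ring
        rw [hkey]
        exact mul_le_mul_of_nonneg_left h2 (by positivity)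
      have hsum := Finset.sum_le_sum hterm
      have heval : ∑ i ∈ Finset.range (N+1),
          (⟪v,w⟫/m + (i:ℝ)*((⟪A w,w⟫ - ε*‖w‖^2)/m^2))
          = ⟪v,w⟫ + ((N:ℝ)/(2*m)) * (⟪A w,w⟫ - ε*‖w‖^2) := by
        rw [Finset.sum_add_distrib, Finset.sum_const, ← Finset.sum_mul, sum_range_cast]
        simp only [Finset.card_range, nsmul_eq_mul]
        rw [hm_def]
        push_cast
        have hN0 : ((N:ℝ)+1) ≠ 0 := by positivity
        field_simp
        ring
      rw [heval] at hsum
      calc u x + (⟪v,w⟫ + ((N:ℝ)/(2*m)) * (⟪A w,w⟫ - ε*‖w‖^2))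
          ≤ u x + ∑ i ∈ Finset.range (N+1), ⟪gl i, p (i+1) - p i⟫ := by linarith
        _ ≤ u (x+w) := hchain
    -- per-N upper bound
    have upper : ∀ N : ℕ, u (x+w)
        ≤ u x + (⟪v,w⟫ + (((N:ℝ)+2)/(2*((N:ℝ)+1))) * (⟪A w,w⟫ + ε*‖w‖^2)) := by
      intro N
      set m : ℝ := (N:ℝ)+1 with hm_def
      have hm : (0:ℝ) < m := by positivity
      choose gl hgl using hGL N
      set p : ℕ → EuclideanSpace ℝ (Fin n) := fun i => x + ((i:ℝ)/m) • w with hp_def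
      have hp : ∀ i, i ≤ N+1 → p i ∈ ball x r := by
        intro i hi
        exact hball _ (by positivity) (by
          rw [div_le_one hm, hm_def]
          exact_mod_cast hi)
      have hchain := chain_ineq hconvb (fun i => p (N+1-i)) (fun i => gl (N+1-i)) (N+1)
        (fun i hi => hp _ (by omega)) (fun i hi => (hgl _ (by omega)).1)
      simp only [Nat.sub_self, Nat.sub_zero] at hchain
      have hp0 : p 0 = x := by simp [hp_def]
      have hpN : p (N+1) = x + w := by
        have h1 : ((N+1:ℕ):ℝ)/m = 1 := by
          rw [hm_def]; push_cast; field_simp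
        simp only [hp_def, h1, one_smul]
      rw [hp0, hpN] at hchain
      have hterm : ∀ i ∈ Finset.range (N+1),
          (-(⟪v,w⟫/m) - (((N:ℝ)+1)/m^2)*(⟪A w,w⟫ + ε*‖w‖^2))
            + (i:ℝ)*((⟪A w,w⟫ + ε*‖w‖^2)/m^2)
          ≤ ⟪gl (N+1-i), p (N+1-(i+1)) - p (N+1-i)⟫ := by
        intro i hi
        rw [Finset.mem_range] at hi
        have hiN : i ≤ N := by omega
        have hc1 : ((N+1-i:ℕ):ℝ) = m - (i:ℝ) := by
          rw [hm_def, Nat.cast_sub (by omega)]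
          push_cast; ring
        have hc2 : ((N+1-(i+1):ℕ):ℝ) = m - (i:ℝ) - 1 := by
          rw [hm_def, Nat.cast_sub (by omega)]
          push_cast; ring
        have hΔ : p (N+1-(i+1)) - p (N+1-i) = (-(1:ℝ)/m) • w := by
          simp only [hp_def, add_sub_add_left_eq_sub, ← sub_smul]
          congr 1
          rw [hc1, hc2]
          field_simp
          ring
        rw [hΔ, real_inner_smul_right]
        set c : ℝ := ((N+1-i:ℕ):ℝ)/m with hc_def
        have hc0 : (0:ℝ) ≤ c := by positivity
        have hcm : c = (m - (i:ℝ))/m := by rw [hc_def, hc1]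
        have hb' : ‖gl (N+1-i) - v - A (c • w)‖ ≤ ε * ‖c • w‖ := by
          rw [norm_smul, Real.norm_eq_abs, abs_of_nonneg hc0, ← mul_assoc, mul_assoc]
          exact (hgl (N+1-i) (by omega)).2
        have htb := term_bound hc0 hb'
        have h1 := (abs_le.mp htb).2
        rw [hcm] at h1
        have h2 : ⟪gl (N+1-i), w⟫
            ≤ ⟪v,w⟫ + ((m - (i:ℝ))/m)*⟪A w,w⟫ + ε*((m - (i:ℝ))/m)*‖w‖^2 := by
          linarith
        have h3 := mul_le_mul_of_nonneg_left h2 (by positivity : (0:ℝ) ≤ 1/m)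
        have hkey : (-(⟪v,w⟫/m) - (((N:ℝ)+1)/m^2)*(⟪A w,w⟫ + ε*‖w‖^2))
              + (i:ℝ)*((⟪A w,w⟫ + ε*‖w‖^2)/m^2)
            = -((1/m)*(⟪v,w⟫ + ((m - (i:ℝ))/m)*⟪A w,w⟫ + ε*((m - (i:ℝ))/m)*‖w‖^2)) := by
          rw [hm_def]
          have hN0 : ((N:ℝ)+1) ≠ 0 := by positivity
          field_simp
          ring
        rw [hkey]
        have : -(1:ℝ)/m * ⟪gl (N+1-i), w⟫ = -((1/m) * ⟪gl (N+1-i), w⟫) := by ring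
        rw [this]
        linarith
      have hsum := Finset.sum_le_sum hterm
      have heval : ∑ i ∈ Finset.range (N+1),
          ((-(⟪v,w⟫/m) - (((N:ℝ)+1)/m^2)*(⟪A w,w⟫ + ε*‖w‖^2))
            + (i:ℝ)*((⟪A w,w⟫ + ε*‖w‖^2)/m^2))
          = -(⟪v,w⟫ + (((N:ℝ)+2)/(2*m)) * (⟪A w,w⟫ + ε*‖w‖^2)) := by
        rw [Finset.sum_add_distrib, Finset.sum_const, ← Finset.sum_mul, sum_range_cast]
        simp only [Finset.card_range, nsmul_eq_mul]
        rw [hm_def]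
        push_cast
        have hN0 : ((N:ℝ)+1) ≠ 0 := by positivity
        field_simp
        ring
      rw [heval] at hsum
      linarith
    -- pass to the limit in N
    set D : ℝ := u (x+w) - (u x + ⟪v,w⟫ + (1/2)*⟪A w,w⟫) with hD_def
    have hns : (0:ℝ) ≤ ‖w‖^2 := by positivity
    have hlow : ∀ N : ℕ, -D - ε*‖w‖^2 ≤ (1/(2*((N:ℝ)+1)))*|⟪A w,w⟫| := by
      intro N
      have h := lower N
      have hm : (0:ℝ) < (N:ℝ)+1 := by positivity
      have hmm : 1/(2*((N:ℝ)+1)) ≤ 1/2 := by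
        rw [div_le_div_iff₀ (by positivity) (by norm_num)]
        linarith [Nat.cast_nonneg (α := ℝ) N]
      have hmp : (0:ℝ) < 1/(2*((N:ℝ)+1)) := by positivity
      have hfrac : ((N:ℝ)/(2*((N:ℝ)+1))) = 1/2 - 1/(2*((N:ℝ)+1)) := by
        rw [eq_sub_iff_add_eq, ← add_div,
          div_eq_div_iff (by positivity : (0:ℝ) < 2*((N:ℝ)+1)).ne' (by norm_num : (2:ℝ) ≠ 0)]
        ring
      rw [hfrac] at h
      have hexp : (1/2 - 1/(2*((N:ℝ)+1)))*(⟪A w,w⟫ - ε*‖w‖^2)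
          = (1/2)*⟪A w,w⟫ - (1/(2*((N:ℝ)+1)))*⟪A w,w⟫
            - ((1/2 - 1/(2*((N:ℝ)+1)))*(ε*‖w‖^2)) := by ring
      rw [hexp] at h
      have h3 : (1/(2*((N:ℝ)+1)))*⟪A w,w⟫ ≤ (1/(2*((N:ℝ)+1)))*|⟪A w,w⟫| :=
        mul_le_mul_of_nonneg_left (le_abs_self _) hmp.le
      have h6 : (1/2 - 1/(2*((N:ℝ)+1)))*(ε*‖w‖^2) ≤ ε*‖w‖^2 :=
        mul_le_of_le_one_left (by positivity) (by linarith)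
      linarith [h, h3, h6, hD_def]
    have hup : ∀ N : ℕ, D - ε*‖w‖^2 ≤ (1/(2*((N:ℝ)+1)))*|⟪A w,w⟫| := by
      intro N
      have h := upper N
      have hm : (0:ℝ) < (N:ℝ)+1 := by positivity
      have hmm : 1/(2*((N:ℝ)+1)) ≤ 1/2 := by
        rw [div_le_div_iff₀ (by positivity) (by norm_num)]
        linarith [Nat.cast_nonneg (α := ℝ) N]
      have hmp : (0:ℝ) < 1/(2*((N:ℝ)+1)) := by positivity
      have hfrac : (((N:ℝ)+2)/(2*((N:ℝ)+1))) = 1/2 + 1/(2*((N:ℝ)+1)) := by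
        rw [div_add_div _ _ (by norm_num : (2:ℝ) ≠ 0) (by positivity : (0:ℝ) < 2*((N:ℝ)+1)).ne',
          div_eq_div_iff (by positivity : (0:ℝ) < 2*((N:ℝ)+1)).ne' (by positivity : (0:ℝ) < 2*(2*((N:ℝ)+1))).ne']
        ring
      rw [hfrac] at h
      have hexp : (1/2 + 1/(2*((N:ℝ)+1)))*(⟪A w,w⟫ + ε*‖w‖^2)
          = (1/2)*⟪A w,w⟫ + (1/(2*((N:ℝ)+1)))*⟪A w,w⟫
            + ((1/2 + 1/(2*((N:ℝ)+1)))*(ε*‖w‖^2)) := by ring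
      rw [hexp] at h
      have h3 : (1/(2*((N:ℝ)+1)))*⟪A w,w⟫ ≤ (1/(2*((N:ℝ)+1)))*|⟪A w,w⟫| :=
        mul_le_mul_of_nonneg_left (le_abs_self _) hmp.le
      have h6 : (1/2 + 1/(2*((N:ℝ)+1)))*(ε*‖w‖^2) ≤ ε*‖w‖^2 :=
        mul_le_of_le_one_left (by positivity) (by linarith)
      linarith [h, h3, h6, hD_def]
    have htend : Tendsto (fun N : ℕ => (1/(2*((N:ℝ)+1)))*|⟪A w,w⟫|) atTop (𝓝 0) := by
      have h0 : Tendsto (fun N : ℕ => (1/((N:ℝ)+1)) * (|⟪A w,w⟫|/2)) atTop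
          (𝓝 (0 * (|⟪A w,w⟫|/2))) := tendsto_one_div_add_atTop_nhds_zero_nat.mul_const _
      rw [zero_mul] at h0
      refine h0.congr (fun N => ?_)
      have hkey : (1:ℝ)/(2*((N:ℝ)+1)) = (1/((N:ℝ)+1)) * (1/2) := by
        rw [one_div, mul_inv]
        ring
      rw [hkey]
      ring
    have hD1 : -D - ε*‖w‖^2 ≤ 0 := ge_of_tendsto' htend hlow
    have hD2 : D - ε*‖w‖^2 ≤ 0 := ge_of_tendsto' htend hup
    rw [abs_le]
    constructor <;> linarith
  refine ⟨δ₁/2, by positivity, fun w hw _ => ?_⟩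
  obtain ⟨z, hzG, hz_lim⟩ := mem_closure_iff_seq_limit.mp (hdense w)
  have hnorm : Tendsto (fun k => ‖z k‖) atTop (𝓝 ‖w‖) :=
    (continuous_norm.tendsto w).comp hz_lim
  have hev : ∀ᶠ k in atTop, ‖z k‖ ≤ δ₁ :=
    hnorm.eventually_le_const (by linarith)
  have hkey : ∀ᶠ k in atTop,
      |u (x + z k) - (u x + ⟪v, z k⟫ + (1/2)*⟪A (z k), z k⟫)| ≤ ε*‖z k‖^2 :=
    hev.mono fun k hk => key (z k) (hzG k) hk
  have hwΩ : x + w ∈ Ω := by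
    apply hrΩ
    rw [mem_ball_iff_norm, add_sub_cancel_left]
    have : δ₁ ≤ r/2 := min_le_right _ _
    linarith
  have hcu : Tendsto (fun k => u (x + z k)) atTop (𝓝 (u (x+w))) :=
    ((hc.continuousAt (hΩ.mem_nhds hwΩ)).tendsto).comp (tendsto_const_nhds.add hz_lim)
  have ht1 : Tendsto (fun k => ⟪v, z k⟫) atTop (𝓝 ⟪v, w⟫) :=
    ((continuous_const.inner continuous_id).tendsto w).comp hz_lim
  have ht2 : Tendsto (fun k => ⟪A (z k), z k⟫) atTop (𝓝 ⟪A w, w⟫) :=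
    ((A.continuous.inner continuous_id).tendsto w).comp hz_lim
  have hF : Tendsto (fun k => |u (x + z k) - (u x + ⟪v, z k⟫ + (1/2)*⟪A (z k), z k⟫)|)
      atTop (𝓝 |u (x+w) - (u x + ⟪v, w⟫ + (1/2)*⟪A w, w⟫)|) :=
    (continuous_abs.tendsto _).comp
      (hcu.sub ((tendsto_const_nhds.add ht1).add (tendsto_const_nhds.mul ht2)))
  have hR : Tendsto (fun k => ε*‖z k‖^2) atTop (𝓝 (ε*‖w‖^2)) :=
    tendsto_const_nhds.mul (hnorm.pow 2)
  exact le_of_tendsto_of_tendsto hF hR hkey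

set_option maxHeartbeats 1000000 in
lemma forward_direction {Ω : Set (EuclideanSpace ℝ (Fin n))} (hΩ : IsOpen Ω)
    {u : EuclideanSpace ℝ (Fin n) → ℝ} (hu : ConvexOn ℝ Ω u)
    {x : EuclideanSpace ℝ (Fin n)} (hx : x ∈ Ω)
    {c : ℝ} {b : EuclideanSpace ℝ (Fin n)}
    {B : EuclideanSpace ℝ (Fin n) →L[ℝ] EuclideanSpace ℝ (Fin n)}
    (h : ∀ ε > (0:ℝ), ∃ δ > (0:ℝ), ∀ w : EuclideanSpace ℝ (Fin n), ‖w‖ ≤ δ → x + w ∈ Ω →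
      |u (x + w) - (c + ⟪b, w⟫ + ⟪B w, w⟫)| ≤ ε * ‖w‖ ^ 2) :
    HasGradientAt u b x ∧
    ∀ ε > (0:ℝ), ∃ δ > (0:ℝ), ∀ w : EuclideanSpace ℝ (Fin n), ‖w‖ ≤ δ → x + w ∈ Ω →
      ∀ g, HasGradientAt u g (x + w) →
      ‖g - b - (B + ContinuousLinearMap.adjoint B) w‖ ≤ ε * ‖w‖ := by
  obtain ⟨r, hr, hball⟩ := Metric.isOpen_iff.mp hΩ x hx
  have hconvb : ConvexOn ℝ (ball x r) u := hu.subset hball (convex_ball x r)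
  -- c = u x
  have hc_eq : c = u x := by
    obtain ⟨δ, hδ, h1⟩ := h 1 one_pos
    have h0 := h1 0 (by simp [hδ.le]) (by simpa using hx)
    simp at h0
    linarith [h0]
  subst hc_eq
  -- differentiability
  have hgrad : HasGradientAt u b x := by
    rw [hasGradientAt_iff_isLittleO, Asymptotics.isLittleO_iff]
    intro C hC
    obtain ⟨δ₁, hδ₁, h1⟩ := h 1 one_pos
    have hρ : (0:ℝ) < min (min δ₁ r) (C/(‖B‖+1)) := by
      have hB1 : (0:ℝ) < ‖B‖+1 := by linarith [norm_nonneg B]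
      exact lt_min (lt_min hδ₁ hr) (div_pos hC hB1)
    filter_upwards [Metric.ball_mem_nhds x hρ] with y hy
    set w := y - x with hw_def
    have hwn : ‖w‖ < min (min δ₁ r) (C/(‖B‖+1)) := by
      rwa [mem_ball_iff_norm] at hy
    have hxw : x + w = y := by rw [hw_def]; abel
    have hmem : x + w ∈ Ω := by
      rw [hxw]
      apply hball
      rw [mem_ball_iff_norm, ← hw_def]
      exact lt_of_lt_of_le hwn (le_trans (min_le_left _ _) (min_le_right _ _))
    have hexp := h1 w (le_of_lt (lt_of_lt_of_le hwn
      (le_trans (min_le_left _ _) (min_le_left _ _)))) hmem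
    rw [hxw] at hexp
    have hB : |⟪B w, w⟫| ≤ ‖B‖ * ‖w‖^2 := by
      calc |⟪B w, w⟫| ≤ ‖B w‖ * ‖w‖ := abs_real_inner_le_norm _ _
        _ ≤ (‖B‖ * ‖w‖) * ‖w‖ := by
            apply mul_le_mul_of_nonneg_right (B.le_opNorm w) (norm_nonneg _)
        _ = ‖B‖ * ‖w‖^2 := by ring
    have key : |u y - u x - ⟪b, w⟫| ≤ (‖B‖+1) * ‖w‖^2 := by
      have h2 := (abs_le.mp hexp).1
      have h3 := (abs_le.mp hexp).2
      rw [abs_le]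
      constructor <;> nlinarith [(abs_le.mp hB).1, (abs_le.mp hB).2]
    have hwC : ‖w‖ ≤ C/(‖B‖+1) :=
      le_of_lt (lt_of_lt_of_le hwn (min_le_right _ _))
    have hfin : (‖B‖+1) * ‖w‖^2 ≤ C * ‖w‖ := by
      have hBpos : (0:ℝ) < ‖B‖+1 := by linarith [norm_nonneg B]
      rw [le_div_iff₀ hBpos] at hwC
      nlinarith [norm_nonneg w]
    exact le_trans key hfin
  refine ⟨hgrad, fun ε hε => ?_⟩
  set A := B + ContinuousLinearMap.adjoint B with hA_def
  set ε' := min 1 ((ε/(‖B‖+5))^2) with hε'_def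
  have hB5 : (0:ℝ) < ‖B‖+5 := by linarith [norm_nonneg B]
  have hε'pos : 0 < ε' := lt_min one_pos (pow_pos (div_pos hε hB5) 2)
  obtain ⟨δ₁, hδ₁, h1⟩ := h ε' hε'pos
  have hsq : Real.sqrt ε' * Real.sqrt ε' = ε' := Real.mul_self_sqrt hε'pos.le
  have hsqrt1 : Real.sqrt ε' ≤ 1 := by
    calc Real.sqrt ε' ≤ Real.sqrt 1 := Real.sqrt_le_sqrt (min_le_left _ _)
      _ = 1 := Real.sqrt_one
  have hsqrtε : Real.sqrt ε' ≤ ε/(‖B‖+5) := by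
    calc Real.sqrt ε' ≤ Real.sqrt ((ε/(‖B‖+5))^2) := Real.sqrt_le_sqrt (min_le_right _ _)
      _ = ε/(‖B‖+5) := Real.sqrt_sq (div_pos hε hB5).le
  have hsqrtpos : 0 < Real.sqrt ε' := Real.sqrt_pos.mpr hε'pos
  refine ⟨min (δ₁/2) (r/4), by positivity, fun w hw hwΩ g hg => ?_⟩
  by_cases hw0 : w = 0
  · have hxw : x + w = x := by simp [hw0]
    rw [hxw] at hg
    have hgb : g = b := grad_unique hg hgrad
    rw [hgb, hw0]
    simp only [sub_self, map_zero, sub_zero, norm_zero, mul_zero, le_refl]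
  · have hwpos : 0 < ‖w‖ := norm_pos_iff.mpr hw0
    set e := g - b - A w with he_def
    by_cases he : e = 0
    · rw [he, norm_zero]
      positivity
    · have hepos : 0 < ‖e‖ := norm_pos_iff.mpr he
      set d : EuclideanSpace ℝ (Fin n) := ‖e‖⁻¹ • e with hd_def
      have hd_norm : ‖d‖ = 1 := by
        rw [hd_def, norm_smul, norm_inv, norm_norm, inv_mul_cancel₀ hepos.ne']
      set t := Real.sqrt ε' * ‖w‖ with ht_def
      have htpos : 0 < t := by positivity
      have htle : t ≤ ‖w‖ := by
        calc t ≤ 1 * ‖w‖ := mul_le_mul_of_nonneg_right hsqrt1 (norm_nonneg _)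
          _ = ‖w‖ := one_mul _
      set z := w + t • d with hz_def
      have hz_norm : ‖z‖ ≤ 2 * ‖w‖ := by
        calc ‖z‖ ≤ ‖w‖ + ‖t • d‖ := norm_add_le _ _
          _ = ‖w‖ + t := by
              rw [norm_smul, Real.norm_eq_abs, abs_of_pos htpos, hd_norm, mul_one]
          _ ≤ 2 * ‖w‖ := by linarith
      have hwδ2 : ‖w‖ ≤ δ₁/2 := le_trans hw (min_le_left _ _)
      have hwδ : ‖w‖ ≤ δ₁ := by linarith
      have hwr : ‖w‖ ≤ r/4 := le_trans hw (min_le_right _ _)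
      have hmem_w : x + w ∈ ball x r := by
        rw [mem_ball_iff_norm, add_sub_cancel_left]
        linarith
      have hmem_z : x + z ∈ ball x r := by
        rw [mem_ball_iff_norm, add_sub_cancel_left]
        linarith
      have hzδ : ‖z‖ ≤ δ₁ := by linarith
      have hsub := grad_ineq hconvb hmem_w hmem_z hg
      have hdiff_z : (x + z) - (x + w) = t • d := by
        rw [hz_def]; abel
      rw [hdiff_z] at hsub
      have hexp_w := h1 w hwδ hwΩ
      have hexp_z := h1 z hzδ (hball hmem_z)
      -- algebra
      have hBz : ⟪B z, z⟫ = ⟪B w, w⟫ + t*⟪B w, d⟫ + t*⟪B d, w⟫ + t*(t*⟪B d, d⟫) := by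
        rw [hz_def, map_add, _root_.map_smul]
        simp only [inner_add_left, inner_add_right, real_inner_smul_left,
          real_inner_smul_right, smul_eq_mul]
        ring
      have hbz : ⟪b, z⟫ = ⟪b, w⟫ + t*⟪b, d⟫ := by
        rw [hz_def]
        simp only [inner_add_right, real_inner_smul_right]
      have hAwd : ⟪A w, d⟫ = ⟪B w, d⟫ + ⟪B d, w⟫ := by
        rw [hA_def]
        simp only [ContinuousLinearMap.add_apply]
        rw [inner_add_left, ContinuousLinearMap.adjoint_inner_left]
        rw [real_inner_comm w (B d)]
      have hed : ⟪e, d⟫ = ‖e‖ := by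
        rw [hd_def, real_inner_smul_right, real_inner_self_eq_norm_sq]
        field_simp
      have hgd : ⟪g, t • d⟫ = t * ⟪g, d⟫ := real_inner_smul_right _ _ _
      have hegd : ⟪g, d⟫ = ‖e‖ + ⟪b, d⟫ + ⟪A w, d⟫ := by
        have : ⟪e, d⟫ = ⟪g, d⟫ - ⟪b, d⟫ - ⟪A w, d⟫ := by
          rw [he_def]
          simp only [inner_sub_left]
        rw [hed] at this
        linarith
      have hBdd : ⟪B d, d⟫ ≤ ‖B‖ := by
        calc ⟪B d, d⟫ ≤ |⟪B d, d⟫| := le_abs_self _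
          _ ≤ ‖B d‖ * ‖d‖ := abs_real_inner_le_norm _ _
          _ ≤ (‖B‖ * ‖d‖) * ‖d‖ := by
              apply mul_le_mul_of_nonneg_right (B.le_opNorm d) (norm_nonneg _)
          _ = ‖B‖ := by rw [hd_norm]; ring
      have hz2 : ‖z‖^2 ≤ 4 * ‖w‖^2 := by nlinarith [norm_nonneg z, norm_nonneg w]
      -- combine
      have hew := (abs_le.mp hexp_w).1
      have hez := (abs_le.mp hexp_z).2
      have hmain : t * ‖e‖ ≤ t*(t*‖B‖) + 5*(ε' * ‖w‖^2) := by
        rw [hgd, hegd] at hsub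
        nlinarith [hsub, hBz, hbz, hAwd, hew, hez, hz2,
          mul_le_mul_of_nonneg_left hBdd (mul_pos htpos htpos).le]
      have hfinal : ‖e‖ ≤ Real.sqrt ε' * ((‖B‖+5) * ‖w‖) := by
        have h2 : t * ‖e‖ ≤ t * (Real.sqrt ε' * ((‖B‖+5) * ‖w‖)) := by
          calc t * ‖e‖ ≤ t*(t*‖B‖) + 5*(ε' * ‖w‖^2) := hmain
            _ = t * (Real.sqrt ε' * ((‖B‖+5) * ‖w‖)) := by
                rw [ht_def]
                linear_combination (-(5*‖w‖^2)) * hsq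
        exact le_of_mul_le_mul_left h2 htpos
      calc ‖e‖ ≤ Real.sqrt ε' * ((‖B‖+5) * ‖w‖) := hfinal
        _ ≤ (ε/(‖B‖+5)) * ((‖B‖+5) * ‖w‖) := by
            apply mul_le_mul_of_nonneg_right hsqrtε
              (mul_nonneg hB5.le (norm_nonneg _))
        _ = ε * ‖w‖ := by
            rw [div_mul_eq_mul_div, ← mul_assoc, mul_comm ε (‖B‖+5), mul_assoc,
              mul_div_assoc]
            rw [mul_comm ε ‖w‖, ← mul_div_assoc, mul_comm (‖B‖+5) (‖w‖*ε), mul_div_assoc,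
              div_self hB5.ne', mul_one, mul_comm]

theorem second_order_characterization {n : ℕ}
    (Ω : Set (EuclideanSpace ℝ (Fin n))) (hΩ : IsOpen Ω)
    (u : EuclideanSpace ℝ (Fin n) → ℝ) (hu : ConvexOn ℝ Ω u) (hc : ContinuousOn u Ω)
    (x : EuclideanSpace ℝ (Fin n)) (hx : x ∈ Ω) :
    ((∃ (c : ℝ) (b : EuclideanSpace ℝ (Fin n))
        (B : EuclideanSpace ℝ (Fin n) →L[ℝ] EuclideanSpace ℝ (Fin n)),
        ∀ ε > (0 : ℝ), ∃ δ > (0 : ℝ), ∀ w : EuclideanSpace ℝ (Fin n), ‖w‖ ≤ δ → x + w ∈ Ω →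
          |u (x + w) - (c + ⟪b, w⟫ + ⟪B w, w⟫)| ≤ ε * ‖w‖ ^ 2) ↔
      (∃ (v : EuclideanSpace ℝ (Fin n))
        (A : EuclideanSpace ℝ (Fin n) →L[ℝ] EuclideanSpace ℝ (Fin n)),
        HasGradientAt u v x ∧
        ∀ ε > (0 : ℝ), ∃ δ > (0 : ℝ), ∀ᵐ w : EuclideanSpace ℝ (Fin n), ‖w‖ ≤ δ →
          x + w ∈ Ω → ∀ g : EuclideanSpace ℝ (Fin n), HasGradientAt u g (x + w) →
            ‖g - v - A w‖ ≤ ε * ‖w‖)) ∧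
    (∀ (v : EuclideanSpace ℝ (Fin n))
        (A : EuclideanSpace ℝ (Fin n) →L[ℝ] EuclideanSpace ℝ (Fin n)),
      HasGradientAt u v x →
      (∀ ε > (0 : ℝ), ∃ δ > (0 : ℝ), ∀ᵐ w : EuclideanSpace ℝ (Fin n), ‖w‖ ≤ δ →
        x + w ∈ Ω → ∀ g : EuclideanSpace ℝ (Fin n), HasGradientAt u g (x + w) →
          ‖g - v - A w‖ ≤ ε * ‖w‖) →
      (∀ ε > (0 : ℝ), ∃ δ > (0 : ℝ), ∀ w : EuclideanSpace ℝ (Fin n), ‖w‖ ≤ δ → x + w ∈ Ω →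
        |u (x + w) - (u x + ⟪v, w⟫ + (1 / 2) * ⟪A w, w⟫)| ≤ ε * ‖w‖ ^ 2) ∧
        ∀ w : EuclideanSpace ℝ (Fin n), 0 ≤ ⟪A w, w⟫) := by
  obtain ⟨r, hr, hball⟩ := Metric.isOpen_iff.mp hΩ x hx
  have hconvb : ConvexOn ℝ (ball x r) u := hu.subset hball (convex_ball x r)
  constructor
  · constructor
    · rintro ⟨c, b, B, h⟩
      obtain ⟨hgrad, h2⟩ := forward_direction hΩ hu hx h
      refine ⟨b, B + ContinuousLinearMap.adjoint B, hgrad, fun ε hε => ?_⟩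
      obtain ⟨δ, hδ, h3⟩ := h2 ε hε
      exact ⟨δ, hδ, Filter.Eventually.of_forall (fun w hw hwΩ g hg => h3 w hw hwΩ g hg)⟩
    · rintro ⟨v, A, hv, hae⟩
      refine ⟨u x, v, (1/2 : ℝ) • A, fun ε hε => ?_⟩
      obtain ⟨δ, hδ, h3⟩ := converse_expansion hΩ hu hc hx hv hae ε hε
      refine ⟨δ, hδ, fun w h1 h2 => ?_⟩
      have := h3 w h1 h2
      have heq : ⟪((1/2 : ℝ) • A) w, w⟫ = (1/2) * ⟪A w, w⟫ := by
        rw [ContinuousLinearMap.smul_apply, real_inner_smul_left]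
      rw [heq]
      exact this
  · intro v A hv hae
    refine ⟨converse_expansion hΩ hu hc hx hv hae, fun w => ?_⟩
    by_cases hw0 : w = 0
    · simp [hw0]
    · have hwpos : 0 < ‖w‖ := norm_pos_iff.mpr hw0
      have hhalf : ∀ ε > (0:ℝ), -(1/2 * ⟪A w, w⟫) ≤ 0 + ε := by
        intro ε hε
        have hε2 : (0:ℝ) < ε/‖w‖^2 := by positivity
        obtain ⟨δ, hδ, h3⟩ := converse_expansion hΩ hu hc hx hv hae (ε/‖w‖^2) hε2
        set s : ℝ := min δ (r/2) / ‖w‖ with hs_def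
        have hspos : 0 < s := by positivity
        have hsn : ‖s • w‖ = min δ (r/2) := by
          rw [norm_smul, Real.norm_eq_abs, abs_of_pos hspos, hs_def,
            div_mul_cancel₀ _ hwpos.ne']
        have hmem : x + s • w ∈ ball x r := by
          rw [mem_ball_iff_norm, add_sub_cancel_left, hsn]
          calc min δ (r/2) ≤ r/2 := min_le_right _ _
            _ < r := by linarith
        have hgi : u x + ⟪v, s • w⟫ ≤ u (x + s • w) := by
          have := grad_ineq hconvb (mem_ball_self hr) hmem hv
          rwa [add_sub_cancel_left] at this
        have hexp := h3 (s • w) (by rw [hsn]; exact min_le_left _ _) (hball hmem)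
        have hA : ⟪A (s • w), s • w⟫ = s * (s * ⟪A w, w⟫) := by
          rw [_root_.map_smul, real_inner_smul_left, real_inner_smul_right]
        have hns : ‖s • w‖^2 = s^2 * ‖w‖^2 := by
          rw [norm_smul, Real.norm_eq_abs, abs_of_pos hspos, mul_pow]
        have hvs : ⟪v, s • w⟫ = s * ⟪v, w⟫ := real_inner_smul_right _ _ _
        rw [hA, hns, hvs] at hexp
        have h4 := (abs_le.mp hexp).2
        have h5 : 0 ≤ (1/2) * (s * (s * ⟪A w, w⟫)) + (ε/‖w‖^2) * (s^2 * ‖w‖^2) := by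
          nlinarith [hgi, h4]
        have h6 : (ε/‖w‖^2) * (s^2 * ‖w‖^2) = s^2 * ε := by
          field_simp
        rw [h6] at h5
        have h7 : 0 ≤ s^2 * ((1/2) * ⟪A w, w⟫ + ε) := by nlinarith [h5]
        have h8 : 0 ≤ (1/2) * ⟪A w, w⟫ + ε :=
          nonneg_of_mul_nonneg_right h7 (by positivity)
        linarith
      have := le_of_forall_pos_le_add hhalf
      linarith
end

section
/- Uniform convergence of second difference quotients: let u : Ω → ℝ be convex on an open set Ω ⊆ ℝⁿ with a second order expansion u(x+w) = u(x) + ⟨∇u(x),w⟩ + φ(w) + o(‖w‖²) at x, where φ is a quadratic form. Then the second difference quotients Δ²_{x,τ}u(w) = (u(x+τw) − u(x) − τ⟨∇u(x),w⟩)/τ² converge uniformly on compact sets to φ(w) as τ → 0⁺, and φ is convex (i.e., positive semidefinite). -/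
open RealInnerProductSpace Filter Metric MeasureTheory Topology

theorem second_difference_quotients_uniform_convergence {n : ℕ}
    (Ω : Set (EuclideanSpace ℝ (Fin n))) (hΩ : IsOpen Ω)
    (u : EuclideanSpace ℝ (Fin n) → ℝ) (hu : ConvexOn ℝ Ω u)
    (x : EuclideanSpace ℝ (Fin n)) (hx : x ∈ Ω)
    (gx : EuclideanSpace ℝ (Fin n)) (hgx : HasGradientAt u gx x)
    (B : EuclideanSpace ℝ (Fin n) →L[ℝ] EuclideanSpace ℝ (Fin n))
    (hexp : ∀ ε > (0 : ℝ), ∃ δ > (0 : ℝ), ∀ w : EuclideanSpace ℝ (Fin n), ‖w‖ ≤ δ →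
      x + w ∈ Ω → |u (x + w) - (u x + ⟪gx, w⟫ + ⟪B w, w⟫)| ≤ ε * ‖w‖ ^ 2) :
    (∀ K : Set (EuclideanSpace ℝ (Fin n)), IsCompact K →
      TendstoUniformlyOn
        (fun (τ : ℝ) (w : EuclideanSpace ℝ (Fin n)) =>
          (u (x + τ • w) - u x - τ * ⟪gx, w⟫) / τ ^ 2)
        (fun w => ⟪B w, w⟫) (𝓝[>] (0 : ℝ)) K) ∧
      ConvexOn ℝ Set.univ (fun w : EuclideanSpace ℝ (Fin n) => ⟪B w, w⟫) := by
  obtain ⟨r, hr, hball⟩ := Metric.isOpen_iff.1 hΩ x hx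
  have hmain : ∀ K : Set (EuclideanSpace ℝ (Fin n)), IsCompact K →
      TendstoUniformlyOn
        (fun (τ : ℝ) (w : EuclideanSpace ℝ (Fin n)) =>
          (u (x + τ • w) - u x - τ * ⟪gx, w⟫) / τ ^ 2)
        (fun w => ⟪B w, w⟫) (𝓝[>] (0 : ℝ)) K := by
    intro K hK
    rw [Metric.tendstoUniformlyOn_iff]
    intro ε hε
    obtain ⟨C, hC⟩ := hK.isBounded.exists_norm_le
    set M : ℝ := max C 0 with hMdef
    have hM0 : (0:ℝ) ≤ M := le_max_right _ _
    have hCM : ∀ w ∈ K, ‖w‖ ≤ M := fun w hw => (hC w hw).trans (le_max_left _ _)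
    have hε' : (0:ℝ) < ε / (2 * (M ^ 2 + 1)) := by positivity
    obtain ⟨δ, hδ, hδ'⟩ := hexp _ hε'
    have hc : (0:ℝ) < min δ r / (M + 1) := by positivity
    filter_upwards [Ioo_mem_nhdsGT_of_mem (Set.left_mem_Ico.2 hc)] with τ hτ w hw
    obtain ⟨hτ0, hτc⟩ := hτ
    have hτ2 : (0:ℝ) < τ ^ 2 := by positivity
    have hnorm : ‖τ • w‖ ≤ τ * M := by
      rw [norm_smul, Real.norm_eq_abs, abs_of_pos hτ0]
      exact mul_le_mul_of_nonneg_left (hCM w hw) hτ0.le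
    have hlt : τ * M < min δ r := by
      have h1 : τ * (M + 1) < min δ r := (lt_div_iff₀ (by positivity)).1 hτc
      nlinarith
    have hmem : x + τ • w ∈ Ω := by
      apply hball
      rw [Metric.mem_ball, dist_self_add_left]
      exact hnorm.trans_lt (hlt.trans_le (min_le_right _ _))
    have hkey := hδ' (τ • w) (hnorm.trans (hlt.trans_le (min_le_left _ _)).le) hmem
    have e1 : ⟪gx, τ • w⟫ = τ * ⟪gx, w⟫ := real_inner_smul_right _ _ _
    have e2 : ⟪B (τ • w), τ • w⟫ = τ ^ 2 * ⟪B w, w⟫ := by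
      rw [B.map_smul, real_inner_smul_left, real_inner_smul_right]; ring
    have hn2 : ‖τ • w‖ ^ 2 ≤ τ ^ 2 * M ^ 2 := by
      have := pow_le_pow_left₀ (norm_nonneg (τ • w)) hnorm 2
      rwa [mul_pow] at this
    rw [Real.dist_eq, abs_sub_comm]
    have heq : (u (x + τ • w) - u x - τ * ⟪gx, w⟫) / τ ^ 2 - ⟪B w, w⟫
        = (u (x + τ • w) - (u x + ⟪gx, τ • w⟫ + ⟪B (τ • w), τ • w⟫)) / τ ^ 2 := by
      rw [e1, e2]; field_simp; ring
    rw [heq, abs_div, abs_of_pos hτ2]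
    have hD : |u (x + τ • w) - (u x + ⟪gx, τ • w⟫ + ⟪B (τ • w), τ • w⟫)|
        ≤ ε / (2 * (M ^ 2 + 1)) * (τ ^ 2 * M ^ 2) :=
      hkey.trans (by nlinarith)
    rw [div_lt_iff₀ hτ2]
    have hmul : ε / (2 * (M ^ 2 + 1)) * (2 * (M ^ 2 + 1)) = ε :=
      div_mul_cancel₀ _ (by positivity)
    nlinarith [mul_pos hε' hτ2, mul_nonneg (mul_nonneg hε'.le hτ2.le) (sq_nonneg M)]
  refine ⟨hmain, convex_univ, ?_⟩
  intro w₁ _ w₂ _ a b ha hb hab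
  have hpt : ∀ w : EuclideanSpace ℝ (Fin n),
      Tendsto (fun τ : ℝ => (u (x + τ • w) - u x - τ * ⟪gx, w⟫) / τ ^ 2)
        (𝓝[>] (0:ℝ)) (𝓝 ⟪B w, w⟫) := fun w =>
    (hmain {w} isCompact_singleton).tendsto_at rfl
  set f : ℝ → EuclideanSpace ℝ (Fin n) → ℝ :=
    fun τ w => (u (x + τ • w) - u x - τ * ⟪gx, w⟫) / τ ^ 2 with hf
  have hten : Tendsto
      (fun τ => f τ (a • w₁ + b • w₂) - (a * f τ w₁ + b * f τ w₂)) (𝓝[>] (0:ℝ))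
      (𝓝 (⟪B (a • w₁ + b • w₂), a • w₁ + b • w₂⟫ - (a * ⟪B w₁, w₁⟫ + b * ⟪B w₂, w₂⟫))) :=
    (hpt _).sub (((hpt w₁).const_mul a).add ((hpt w₂).const_mul b))
  have hc2 : (0:ℝ) < r / (max ‖w₁‖ ‖w₂‖ + 1) := by positivity
  have hev : ∀ᶠ τ in 𝓝[>] (0:ℝ),
      f τ (a • w₁ + b • w₂) - (a * f τ w₁ + b * f τ w₂) ≤ 0 := by
    filter_upwards [Ioo_mem_nhdsGT_of_mem (Set.left_mem_Ico.2 hc2)] with τ hτ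
    obtain ⟨hτ0, hτc⟩ := hτ
    have hτ2 : (0:ℝ) < τ ^ 2 := by positivity
    have hmem : ∀ w : EuclideanSpace ℝ (Fin n), ‖w‖ ≤ max ‖w₁‖ ‖w₂‖ → x + τ • w ∈ Ω := by
      intro w hw
      apply hball
      rw [Metric.mem_ball, dist_self_add_left, norm_smul, Real.norm_eq_abs, abs_of_pos hτ0]
      have h1 : τ * (max ‖w₁‖ ‖w₂‖ + 1) < r := (lt_div_iff₀ (by positivity)).1 hτc
      nlinarith [norm_nonneg w]
    have hm1 : x + τ • w₁ ∈ Ω := hmem w₁ (le_max_left _ _)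
    have hm2 : x + τ • w₂ ∈ Ω := hmem w₂ (le_max_right _ _)
    have hcomb : x + τ • (a • w₁ + b • w₂) = a • (x + τ • w₁) + b • (x + τ • w₂) := by
      have h : a • (x + τ • w₁) + b • (x + τ • w₂)
          = (a + b) • x + τ • (a • w₁ + b • w₂) := by module
      rw [h, hab, one_smul]
    have hconv : u (x + τ • (a • w₁ + b • w₂))
        ≤ a * u (x + τ • w₁) + b * u (x + τ • w₂) := by
      rw [hcomb]
      exact hu.2 hm1 hm2 ha hb hab
    have hinner : ⟪gx, a • w₁ + b • w₂⟫ = a * ⟪gx, w₁⟫ + b * ⟪gx, w₂⟫ := by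
      rw [inner_add_right, real_inner_smul_right, real_inner_smul_right]
    have hux : a * u x + b * u x = u x := by rw [← add_mul, hab, one_mul]
    have hnum : u (x + τ • (a • w₁ + b • w₂)) - u x - τ * ⟪gx, a • w₁ + b • w₂⟫
        ≤ a * (u (x + τ • w₁) - u x - τ * ⟪gx, w₁⟫)
          + b * (u (x + τ • w₂) - u x - τ * ⟪gx, w₂⟫) := by
      rw [hinner]
      linarith [hconv, hux]
    have hdiv : (u (x + τ • (a • w₁ + b • w₂)) - u x - τ * ⟪gx, a • w₁ + b • w₂⟫) / τ ^ 2
        ≤ (a * (u (x + τ • w₁) - u x - τ * ⟪gx, w₁⟫)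
          + b * (u (x + τ • w₂) - u x - τ * ⟪gx, w₂⟫)) / τ ^ 2 := by
      gcongr
    have hsum : (a * (u (x + τ • w₁) - u x - τ * ⟪gx, w₁⟫)
          + b * (u (x + τ • w₂) - u x - τ * ⟪gx, w₂⟫)) / τ ^ 2
        = a * f τ w₁ + b * f τ w₂ := by
      rw [hf]; ring
    have hfc : f τ (a • w₁ + b • w₂)
        = (u (x + τ • (a • w₁ + b • w₂)) - u x - τ * ⟪gx, a • w₁ + b • w₂⟫) / τ ^ 2 := rfl
    rw [hfc]
    linarith [hdiv, hsum.le, hsum.ge]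
  have hle := le_of_tendsto hten hev
  simp only [smul_eq_mul]
  linarith
end
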